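/- arXiv:1208.1663 — 7 statements merged into one kernel-verified Lean document; each statement's English description precedes it below -/
import Mathlib

section
/- The degree $\delta(m,e)$ of the tetrahedron index $I_\Delta(m,e)(q)$ (the smallest half-integer power of $q$ appearing with nonzero coefficient) is given by $\delta(m,e) = \frac{1}{2}\left( m_+ (m+e)_+ + (-m)_+ e_+ + (-e)_+ (-e-m)_+ + \max\{0, m, -e\} \right)$, where $x_+ = \max\{0,x\}$. -/
/- We work with the formal variable `t = q^(1/2)`, so that `q = t^2` and
elements of `ℤ((q^(1/2)))` are described by their coefficient functions `ℤ → ℤ`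
(coefficient of `t^k`).  The `q`-Pochhammer symbol `(q)_n = ∏_{i=1}^n (1-q^i)`
is a power series in `t` with constant term `1`, hence invertible. -/

/-- `(q)_n = ∏_{i=1}^n (1 - q^i)` as a power series in `t` with `q = t^2`. -/
noncomputable def qPoch (n : ℕ) : PowerSeries ℤ :=
  ∏ i ∈ Finset.range n, (1 - (PowerSeries.X : PowerSeries ℤ) ^ (2 * (i + 1)))

/-- The inverse `1/(q)_n` (the constant term of `(q)_n` is `1`). -/
noncomputable def qPochInv (n : ℕ) : PowerSeries ℤ :=
  PowerSeries.invOfUnit (qPoch n) 1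

/-- Coefficient of `t^k` in a power series in `t` (zero for negative `k`). -/
noncomputable def coeffZ (k : ℤ) (f : PowerSeries ℤ) : ℤ :=
  if 0 ≤ k then PowerSeries.coeff k.toNat f else 0

/-- Coefficient of `t^k` in the summand
`S(m,e,n) = (-1)^n q^{n(n+1)/2 - (n+e/2)m} / ((q)_n (q)_{n+e})`
of the tetrahedron index, with the convention `1/(q)_n = 0` for `n < 0`.
(In `t`-units the exponent is `n(n+1) - (2n+e)m`.) -/
noncomputable def Scoeff (m e : ℤ) (n : ℕ) (k : ℤ) : ℤ :=
  if 0 ≤ (n : ℤ) + e then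
    (-1) ^ n *
      coeffZ (k - ((n : ℤ) * (n + 1) - (2 * n + e) * m))
        (qPochInv n * qPochInv ((n : ℤ) + e).toNat)
  else 0

/-- Coefficient of `t^k` in the tetrahedron index `I_Δ(m,e)`; for fixed `k`
only finitely many `n` contribute, so the `finsum` is the honest sum. -/
noncomputable def Icoeff (m e : ℤ) (k : ℤ) : ℤ :=
  ∑ᶠ n : ℕ, Scoeff m e n k

/-- `I_Δ(m,e)` has degree `d` (in `t = q^{1/2}`-units, i.e. `q`-degree `d/2`):
the coefficient of `t^d` is nonzero and all lower coefficients vanish. -/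
def HasDegree (m e d : ℤ) : Prop :=
  Icoeff m e d ≠ 0 ∧ ∀ k < d, Icoeff m e k = 0

/-!
Multiply `I_Δ(m,e)` by `(q)_∞ = ∑_j (-1)^j q^{j(j+1)/2} / (q)_j`. Euler's identity
`(q)_∞ / (q)_N = (q^{N+1};q)_∞ = ∑_j (-1)^j q^{j(j-1)/2 + (N+1)j} / (q)_j`, whose right-hand side
vanishes for `N < 0`, turns the product into the double sum
`∑_{n,j} (-1)^{n+j} q^{((n+j)(n+j+1) - 2mn + 2ej - em)/2} / ((q)_n (q)_j)`, which is symmetric under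
`(m, e, n, j) ↦ (-e, -m, j, n)`. Cancelling `(q)_∞` gives `I_Δ(m,e) = I_Δ(-e,-m)`. Euler's series is
taken as the definition of `(q^c;q)_∞`; only its recursion `(q^c;q)_∞ = (1 - q^c) (q^{c+1};q)_∞` is
needed.

If `m ≤ max(0,-e)`, the exponents of the summands increase strictly from the first nonzero summand
`n = max(0,-e)` on, so the degree is the exponent of that summand, whose coefficient is `±1`. The
remaining case `m ≥ 1, m + e ≥ 1` is reduced to this one by the symmetry.
-/

open PowerSeries Finset

theorem finsum_eq_sum_range_of_eq_zero {M : Type*} [AddCommMonoid M] {f : ℕ → M} {B : ℕ}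
    (hf : ∀ n, B ≤ n → f n = 0) : ∑ᶠ n, f n = ∑ n ∈ range B, f n :=
  finsum_eq_sum_of_support_subset f fun n hn => by
    by_contra h
    exact hn (hf n (by simpa using h))

theorem constantCoeff_qPoch (n : ℕ) : constantCoeff (qPoch n) = 1 := by
  simp [qPoch, map_prod]

theorem qPoch_mul_qPochInv (n : ℕ) : qPoch n * qPochInv n = 1 :=
  mul_invOfUnit _ _ (by simp [constantCoeff_qPoch])

theorem constantCoeff_qPochInv (n : ℕ) : constantCoeff (qPochInv n) = 1 := by
  simpa [constantCoeff_qPoch] using congrArg constantCoeff (qPoch_mul_qPochInv n)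

theorem qPoch_succ (n : ℕ) : qPoch (n + 1) = qPoch n * (1 - X ^ (2 * (n + 1))) :=
  prod_range_succ _ _

theorem one_sub_X_pow_mul_qPochInv_succ (n : ℕ) :
    (1 - X ^ (2 * (n + 1))) * qPochInv (n + 1) = qPochInv n := by
  have hne : qPoch n ≠ 0 := fun h => by simpa [h] using qPoch_mul_qPochInv n
  apply mul_left_cancel₀ hne
  rw [qPoch_mul_qPochInv, ← mul_assoc, ← qPoch_succ, qPoch_mul_qPochInv]

theorem coeffZ_of_neg {k : ℤ} (hk : k < 0) (f : ℤ⟦X⟧) : coeffZ k f = 0 := by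
  simp [coeffZ, not_le.2 hk]

@[simp]
theorem coeffZ_natCast (K : ℕ) (f : ℤ⟦X⟧) : coeffZ K f = coeff K f := by
  simp [coeffZ]

@[simp]
theorem coeffZ_zero_right (k : ℤ) : coeffZ k (0 : ℤ⟦X⟧) = 0 := by
  simp [coeffZ]

theorem coeffZ_zero_eq_constantCoeff (f : ℤ⟦X⟧) : coeffZ 0 f = constantCoeff f := by
  simpa using coeffZ_natCast 0 f

theorem coeffZ_sub (k : ℤ) (f g : ℤ⟦X⟧) : coeffZ k (f - g) = coeffZ k f - coeffZ k g := by
  unfold coeffZ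
  split_ifs <;> simp

theorem coeffZ_X_pow_mul (k : ℤ) (a : ℕ) (f : ℤ⟦X⟧) : coeffZ k (X ^ a * f) = coeffZ (k - a) f := by
  rcases lt_or_ge k 0 with hk | hk
  · rw [coeffZ_of_neg hk, coeffZ_of_neg (by omega)]
  lift k to ℕ using hk
  rw [coeffZ_natCast, coeff_X_pow_mul']
  split_ifs with h
  · rw [← coeffZ_natCast, Nat.cast_sub h]
  · rw [coeffZ_of_neg (by omega)]

theorem coeffZ_one_sub_X_pow_mul (k : ℤ) (a : ℕ) (f : ℤ⟦X⟧) :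
    coeffZ k ((1 - X ^ a) * f) = coeffZ k f - coeffZ (k - a) f := by
  rw [sub_mul, one_mul, coeffZ_sub, coeffZ_X_pow_mul]

theorem sum_antidiagonal_coeff_mul_coeffZ (f g : ℤ⟦X⟧) (K : ℕ) {s : ℤ} (hs : 0 ≤ s) :
    ∑ p ∈ antidiagonal K, coeff p.1 f * coeffZ (p.2 - s) g = coeffZ (K - s) (f * g) := by
  lift s to ℕ using hs
  simp_rw [← coeffZ_X_pow_mul, coeffZ_natCast, ← coeff_mul, mul_left_comm]

theorem coeff_mul_eq_sum_of_coeff_eq_sum {u v : ℤ⟦X⟧} {K B : ℕ} (w s : ℕ → ℤ) (g : ℕ → ℤ⟦X⟧)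
    (hs : ∀ i, 0 ≤ s i) (hv : ∀ b ≤ K, coeff b v = ∑ i ∈ range B, w i * coeffZ (b - s i) (g i)) :
    coeff K (u * v) = ∑ i ∈ range B, w i * coeffZ (K - s i) (u * g i) := by
  rw [coeff_mul, sum_congr rfl fun p hp => by
    rw [hv p.2 (Finset.HasAntidiagonal.antidiagonal.snd_le hp)]]
  simp_rw [mul_sum]
  rw [sum_comm]
  refine sum_congr rfl fun i _ => ?_
  rw [← sum_antidiagonal_coeff_mul_coeffZ _ _ _ (hs i), mul_sum]
  exact sum_congr rfl fun p _ => by ring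

/-- `t`-exponent of `q^{j(j-1)/2 + cj}`. -/
def eulerExp (c : ℤ) (j : ℕ) : ℤ := j * (j - 1) + 2 * c * j

/-- Coefficient of `t^k` in `u · ∑_j (-1)^j q^{j(j-1)/2 + cj} / (q)_j`, i.e. in `u · (q^c;q)_∞`. -/
noncomputable def eulerCoeff (u : ℤ⟦X⟧) (c k : ℤ) : ℤ :=
  ∑ᶠ j : ℕ, (-1) ^ j * coeffZ (k - eulerExp c j) (u * qPochInv j)

theorem exists_lt_eulerExp (c k : ℤ) : ∃ B : ℕ, ∀ j, B ≤ j → k < eulerExp c j := by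
  refine ⟨k.natAbs + 2 * c.natAbs + 2, fun j hj => ?_⟩
  have hpos : 1 ≤ (j : ℤ) - 1 + 2 * c := by omega
  have hk : k < j := by omega
  have := mul_le_mul_of_nonneg_left hpos (Nat.cast_nonneg (α := ℤ) j)
  rw [eulerExp]
  linarith

theorem eulerExp_nonneg {c : ℤ} (hc : 0 ≤ c) (j : ℕ) : 0 ≤ eulerExp c j := by
  rw [eulerExp]
  rcases j with _ | j
  · simp
  · push_cast
    nlinarith

theorem eulerCoeff_eq_sum {u : ℤ⟦X⟧} {c k : ℤ} {B : ℕ} (hB : ∀ j, B ≤ j → k < eulerExp c j) :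
    eulerCoeff u c k = ∑ j ∈ range B, (-1) ^ j * coeffZ (k - eulerExp c j) (u * qPochInv j) :=
  finsum_eq_sum_range_of_eq_zero fun j hj => by
    rw [coeffZ_of_neg (by linarith [hB j hj]), mul_zero]

/-- The recursion `(q^c;q)_∞ = (1 - q^c) (q^{c+1};q)_∞`, read off the series. -/
theorem eulerCoeff_eq_sub (u : ℤ⟦X⟧) (c k : ℤ) :
    eulerCoeff u c k = eulerCoeff u (c + 1) k - eulerCoeff u (c + 1) (k - 2 * c) := by
  obtain ⟨B₁, h₁⟩ := exists_lt_eulerExp c k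
  obtain ⟨B₂, h₂⟩ := exists_lt_eulerExp (c + 1) k
  obtain ⟨B₃, h₃⟩ := exists_lt_eulerExp (c + 1) (k - 2 * c)
  set B := max B₁ (max B₂ B₃)
  rw [eulerCoeff_eq_sum (B := B + 1) fun j hj => h₁ j (by omega),
    eulerCoeff_eq_sum (B := B + 1) fun j hj => h₂ j (by omega),
    eulerCoeff_eq_sum (B := B) fun j hj => h₃ j (by omega)]
  refine eq_sub_of_add_eq (eq_of_sub_eq_zero ?_)
  rw [add_sub_right_comm, ← sum_sub_distrib]
  have hdiff : ∀ j : ℕ, (-1) ^ j * coeffZ (k - eulerExp c j) (u * qPochInv j) -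
      (-1) ^ j * coeffZ (k - eulerExp (c + 1) j) (u * qPochInv j) =
        (-1) ^ j * coeffZ (k - eulerExp c j) ((1 - X ^ (2 * j)) * (u * qPochInv j)) := fun j => by
    rw [coeffZ_one_sub_X_pow_mul, eulerExp, eulerExp]
    push_cast
    ring_nf
  have hshift : ∀ i : ℕ, (-1) ^ (i + 1) *
      coeffZ (k - eulerExp c (i + 1)) ((1 - X ^ (2 * (i + 1))) * (u * qPochInv (i + 1))) =
        -((-1) ^ i * coeffZ (k - 2 * c - eulerExp (c + 1) i) (u * qPochInv i)) := fun i => by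
    rw [mul_left_comm, one_sub_X_pow_mul_qPochInv_succ, eulerExp, eulerExp]
    push_cast
    ring_nf
  simp_rw [hdiff]
  rw [sum_range_succ', sum_congr rfl fun i _ => hshift i, sum_neg_distrib]
  simp

theorem eulerCoeff_of_nonpos (u : ℤ⟦X⟧) {c : ℤ} (hc : c ≤ 0) (k : ℤ) : eulerCoeff u c k = 0 := by
  induction c, hc using Int.leInductionDown generalizing k with
  | base => simpa using eulerCoeff_eq_sub u 0 k
  | pred c _ ih => rw [eulerCoeff_eq_sub, sub_add_cancel, ih, ih, sub_zero]

/-- Euler's series for `(q^c;q)_∞`. -/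
noncomputable def eulerSeries (c : ℕ) : ℤ⟦X⟧ := mk fun K => eulerCoeff 1 c K

theorem coeffZ_mul_eulerSeries (u : ℤ⟦X⟧) (c : ℕ) (k : ℤ) :
    coeffZ k (u * eulerSeries c) = eulerCoeff u c k := by
  have hexp := eulerExp_nonneg c.cast_nonneg
  rcases lt_or_ge k 0 with hk | hk
  · rw [coeffZ_of_neg hk, eulerCoeff, finsum_eq_zero_of_forall_eq_zero fun j => by
      rw [coeffZ_of_neg (by linarith [hexp j]), mul_zero]]
  lift k to ℕ using hk
  obtain ⟨B, hB⟩ := exists_lt_eulerExp c k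
  rw [coeffZ_natCast, eulerCoeff_eq_sum hB]
  refine coeff_mul_eq_sum_of_coeff_eq_sum _ _ _ hexp fun b hb => ?_
  rw [eulerSeries, coeff_mk, eulerCoeff_eq_sum fun j hj => lt_of_le_of_lt (by omega) (hB j hj)]
  simp_rw [one_mul]

theorem coeffZ_eulerSeries (c : ℕ) (k : ℤ) : coeffZ k (eulerSeries c) = eulerCoeff 1 c k := by
  simpa using coeffZ_mul_eulerSeries 1 c k

theorem eulerSeries_eq_one_sub_X_pow_mul (c : ℕ) :
    eulerSeries c = (1 - X ^ (2 * c)) * eulerSeries (c + 1) := by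
  ext K
  rw [← coeffZ_natCast, ← coeffZ_natCast, coeffZ_one_sub_X_pow_mul, coeffZ_eulerSeries,
    coeffZ_eulerSeries, coeffZ_eulerSeries, eulerCoeff_eq_sub]
  push_cast
  rfl

theorem eulerSeries_one_eq_qPoch_mul (N : ℕ) : eulerSeries 1 = qPoch N * eulerSeries (N + 1) := by
  induction N with
  | zero => simp [qPoch]
  | succ N ih => rw [ih, eulerSeries_eq_one_sub_X_pow_mul (N + 1), qPoch_succ, mul_assoc]

theorem eulerSeries_one_mul_qPochInv (N : ℕ) :
    eulerSeries 1 * qPochInv N = eulerSeries (N + 1) := by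
  rw [eulerSeries_one_eq_qPoch_mul N, mul_right_comm, qPoch_mul_qPochInv, one_mul]

theorem constantCoeff_eulerSeries_one : constantCoeff (eulerSeries 1) = 1 := by
  rw [← coeff_zero_eq_constantCoeff_apply, eulerSeries, coeff_mk, eulerCoeff,
    finsum_eq_single _ 0 fun j hj => by
      have : (1 : ℤ) ≤ j := by omega
      rw [coeffZ_of_neg (by rw [eulerExp]; push_cast; nlinarith), mul_zero]]
  simp [eulerExp, coeffZ_zero_eq_constantCoeff, constantCoeff_qPochInv]

theorem eulerSeries_one_ne_zero : eulerSeries 1 ≠ 0 := fun h => by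
  simpa [h] using constantCoeff_eulerSeries_one

section Symmetry

variable {m e : ℤ}

/-- `t`-exponent of the `n`-th summand of `I_Δ(m,e)`. -/
def summandExp (m e : ℤ) (n : ℕ) : ℤ := n * (n + 1) - (2 * n + e) * m

/-- `1/(q)_N`, with `1/(q)_N = 0` for `N < 0`. -/
noncomputable def qPochInvInt (N : ℤ) : ℤ⟦X⟧ := if 0 ≤ N then qPochInv N.toNat else 0

/-- `t`-exponent of the `(n, j)` term of `I_Δ(m,e) (q)_∞` as a double sum. -/
def pairExp (m e : ℤ) (n j : ℕ) : ℤ := (n + j) * (n + j + 1) - 2 * m * n + 2 * e * j - e * m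

def minExp (m e : ℤ) : ℤ := -m ^ 2 - e ^ 2 - e * m

theorem summandExp_add_eulerExp (m e : ℤ) (n j : ℕ) :
    summandExp m e n + eulerExp (n + e + 1) j = pairExp m e n j := by
  rw [summandExp, eulerExp, pairExp]
  ring

theorem pairExp_zero_right (m e : ℤ) (n : ℕ) : pairExp m e n 0 = summandExp m e n := by
  rw [pairExp, summandExp]
  ring

theorem pairExp_neg_swap (m e : ℤ) (n j : ℕ) : pairExp (-e) (-m) j n = pairExp m e n j := by
  rw [pairExp, pairExp]
  ring

theorem minExp_neg_swap (m e : ℤ) : minExp (-e) (-m) = minExp m e := by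
  rw [minExp, minExp]
  ring

theorem minExp_le_pairExp (m e : ℤ) (n j : ℕ) : minExp m e ≤ pairExp m e n j := by
  have hn : (0 : ℤ) ≤ n := n.cast_nonneg
  have hj : (0 : ℤ) ≤ j := j.cast_nonneg
  rw [minExp, pairExp]
  nlinarith [sq_nonneg ((n : ℤ) - m), sq_nonneg ((j : ℤ) + e), mul_nonneg hn hj]

theorem exists_lt_pairExp (m e x : ℤ) : ∃ B : ℕ, ∀ n j : ℕ, B ≤ n + j → x < pairExp m e n j := by
  refine ⟨2 * (m.natAbs + e.natAbs) + (x + e * m).natAbs + 1, fun n j h => ?_⟩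
  have hn : (0 : ℤ) ≤ n := n.cast_nonneg
  have hj : (0 : ℤ) ≤ j := j.cast_nonneg
  set s : ℤ := n + j
  set y := x + e * m
  have hs : 2 * (|m| + |e|) + |y| + 1 ≤ s := by
    simp only [Int.abs_eq_natAbs]
    omega
  have hm : -2 * m * n ≥ -2 * |m| * s := by nlinarith [le_abs_self m, abs_nonneg m]
  have he : 2 * e * j ≥ -2 * |e| * s := by nlinarith [neg_abs_le e, abs_nonneg e]
  have hy := le_abs_self y
  have hquad : s * (2 * (|m| + |e|) + |y| + 1) ≤ s * s := by nlinarith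
  have hlin : |y| + 1 ≤ s * (|y| + 1) := by nlinarith [abs_nonneg m, abs_nonneg e, abs_nonneg y]
  rw [pairExp]
  nlinarith

theorem Scoeff_eq (m e : ℤ) (n : ℕ) (k : ℤ) :
    Scoeff m e n k =
      (-1) ^ n * coeffZ (k - summandExp m e n) (qPochInv n * qPochInvInt (n + e)) := by
  unfold Scoeff qPochInvInt summandExp
  split_ifs <;> simp

theorem Scoeff_of_lt {n : ℕ} {k : ℤ} (h : k < summandExp m e n) : Scoeff m e n k = 0 := by
  rw [Scoeff_eq, coeffZ_of_neg (by omega), mul_zero]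

theorem Icoeff_eq_sum {k : ℤ} {B : ℕ} (hB : ∀ n, B ≤ n → k < summandExp m e n) :
    Icoeff m e k = ∑ n ∈ range B, Scoeff m e n k :=
  finsum_eq_sum_range_of_eq_zero fun n hn => Scoeff_of_lt (hB n hn)

theorem Icoeff_of_lt_minExp {k : ℤ} (h : k < minExp m e) : Icoeff m e k = 0 :=
  finsum_eq_zero_of_forall_eq_zero fun n => Scoeff_of_lt <| by
    linarith [minExp_le_pairExp m e n 0, pairExp_zero_right m e n]

theorem coeffZ_eulerSeries_one_mul_qPochInvInt (u : ℤ⟦X⟧) (N k : ℤ) :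
    coeffZ k (eulerSeries 1 * (u * qPochInvInt N)) = eulerCoeff u (N + 1) k := by
  rcases lt_or_ge N 0 with hN | hN
  · rw [qPochInvInt, if_neg hN.not_ge, mul_zero, mul_zero, coeffZ_zero_right,
      eulerCoeff_of_nonpos _ (by omega)]
  lift N to ℕ using hN
  rw [qPochInvInt, if_pos N.cast_nonneg, Int.toNat_natCast, mul_left_comm,
    eulerSeries_one_mul_qPochInv, coeffZ_mul_eulerSeries]
  push_cast
  rfl

/-- `t^{-minExp m e} I_Δ(m,e)`, a power series in `t`. -/
noncomputable def shiftedIndex (m e : ℤ) : ℤ⟦X⟧ := mk fun K => Icoeff m e (K + minExp m e)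

theorem coeff_eulerSeries_one_mul_shiftedIndex {K B : ℕ}
    (hB : ∀ n j : ℕ, B ≤ n + j → K + minExp m e < pairExp m e n j) :
    coeff K (eulerSeries 1 * shiftedIndex m e) = ∑ n ∈ range B, ∑ j ∈ range B,
      (-1) ^ (n + j) * coeffZ (K + minExp m e - pairExp m e n j) (qPochInv n * qPochInv j) := by
  rw [coeff_mul_eq_sum_of_coeff_eq_sum (fun n => (-1) ^ n) (fun n => summandExp m e n - minExp m e)
    (fun n => qPochInv n * qPochInvInt (n + e))
    (fun n => by linarith [minExp_le_pairExp m e n 0, pairExp_zero_right m e n]) fun b hb => ?_]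
  · refine sum_congr rfl fun n _ => ?_
    rw [coeffZ_eulerSeries_one_mul_qPochInvInt, eulerCoeff_eq_sum (B := B) fun j hj => ?_, mul_sum]
    · refine sum_congr rfl fun j _ => ?_
      rw [← summandExp_add_eulerExp, pow_add, mul_assoc]
      ring_nf
    · linarith [hB n j (by omega), summandExp_add_eulerExp m e n j]
  · rw [shiftedIndex, coeff_mk, Icoeff_eq_sum fun n hn => ?_]
    · refine sum_congr rfl fun n _ => ?_
      rw [Scoeff_eq]
      ring_nf
    · have := hB n 0 (by omega)
      rw [pairExp_zero_right] at this
      omega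

theorem eulerSeries_one_mul_shiftedIndex_neg_swap (m e : ℤ) :
    eulerSeries 1 * shiftedIndex (-e) (-m) = eulerSeries 1 * shiftedIndex m e := by
  ext K
  obtain ⟨B, hB⟩ := exists_lt_pairExp m e (K + minExp m e)
  rw [coeff_eulerSeries_one_mul_shiftedIndex hB, coeff_eulerSeries_one_mul_shiftedIndex (B := B)
    fun n j h => by rw [minExp_neg_swap, pairExp_neg_swap]; exact hB j n (by omega), sum_comm]
  refine sum_congr rfl fun n _ => sum_congr rfl fun j _ => ?_
  rw [minExp_neg_swap, pairExp_neg_swap, add_comm j n, mul_comm (qPochInv j)]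

theorem Icoeff_neg_swap (m e : ℤ) : Icoeff (-e) (-m) = Icoeff m e := by
  have hshift : shiftedIndex (-e) (-m) = shiftedIndex m e :=
    mul_left_cancel₀ eulerSeries_one_ne_zero (eulerSeries_one_mul_shiftedIndex_neg_swap m e)
  funext k
  rcases lt_or_ge k (minExp m e) with hk | hk
  · rw [Icoeff_of_lt_minExp (by rwa [minExp_neg_swap]), Icoeff_of_lt_minExp hk]
  obtain ⟨K, rfl⟩ : ∃ K : ℕ, k = K + minExp m e := ⟨(k - minExp m e).toNat, by omega⟩
  simpa [shiftedIndex, minExp_neg_swap] using congrArg (coeff K) hshift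

end Symmetry

section Degree

variable {m e : ℤ}

theorem summandExp_lt_summandExp {N n : ℕ} (hm : m ≤ N) (h : N < n) :
    summandExp m e N < summandExp m e n := by
  have hNn : (N : ℤ) < n := by exact_mod_cast h
  have : summandExp m e n - summandExp m e N = (n - N) * (n + N + 1 - 2 * m) := by
    rw [summandExp, summandExp]
    ring
  nlinarith

theorem Scoeff_summandExp {n : ℕ} (h : 0 ≤ (n : ℤ) + e) :
    Scoeff m e n (summandExp m e n) = (-1) ^ n := by
  rw [Scoeff_eq, sub_self, coeffZ_zero_eq_constantCoeff, map_mul, qPochInvInt, if_pos h,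
    constantCoeff_qPochInv, constantCoeff_qPochInv, mul_one, mul_one]

theorem Scoeff_of_add_neg {n : ℕ} (h : (n : ℤ) + e < 0) (k : ℤ) : Scoeff m e n k = 0 := by
  simp [Scoeff, h.not_ge]

theorem hasDegree_summandExp (h : m ≤ (-e).toNat) : HasDegree m e (summandExp m e (-e).toNat) := by
  set N := (-e).toNat
  have hN : 0 ≤ (N : ℤ) + e := by omega
  have hbelow : ∀ n < N, ∀ k, Scoeff m e n k = 0 := fun n hn => Scoeff_of_add_neg (by omega)
  refine ⟨?_, fun k hk => finsum_eq_zero_of_forall_eq_zero fun n => ?_⟩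
  · rw [Icoeff, finsum_eq_single _ N fun n hn => ?_, Scoeff_summandExp hN]
    · exact pow_ne_zero _ (by norm_num)
    rcases lt_or_gt_of_ne hn with hlt | hgt
    · exact hbelow n hlt _
    · exact Scoeff_of_lt (summandExp_lt_summandExp h hgt)
  rcases lt_or_ge n N with hlt | hge
  · exact hbelow n hlt k
  · rcases hge.eq_or_lt with rfl | hgt
    · exact Scoeff_of_lt hk
    · exact Scoeff_of_lt (hk.trans (summandExp_lt_summandExp h hgt))

/-- `2δ(m,e)`, twice the degree of `I_Δ(m,e)` in `q`. -/
def tetDegree (m e : ℤ) : ℤ :=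
  max m 0 * max (m + e) 0 + max (-m) 0 * max e 0 + max (-e) 0 * max (-e - m) 0 + max 0 (max m (-e))

theorem tetDegree_eq_summandExp (h : m ≤ (-e).toNat) :
    tetDegree m e = summandExp m e (-e).toNat := by
  rw [tetDegree, summandExp]
  rcases le_total 0 e with he | he
  · rw [show max m 0 = 0 by omega, show max (-m) 0 = -m by omega, show max e 0 = e by omega,
      show max (-e) 0 = 0 by omega, show max 0 (max m (-e)) = 0 by omega,
      show ((-e).toNat : ℤ) = 0 by omega]
    ring
  · rw [show max (m + e) 0 = 0 by omega, show max e 0 = 0 by omega, show max (-e) 0 = -e by omega,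
      show max (-e - m) 0 = -e - m by omega, show max 0 (max m (-e)) = -e by omega,
      show ((-e).toNat : ℤ) = -e by omega]
    ring

theorem tetDegree_neg_swap (m e : ℤ) : tetDegree (-e) (-m) = tetDegree m e := by
  rw [tetDegree, tetDegree, neg_neg, neg_neg, sub_neg_eq_add, ← sub_eq_add_neg, max_comm (-e) m]
  ring

theorem hasDegree_neg_swap_iff {d : ℤ} : HasDegree (-e) (-m) d ↔ HasDegree m e d := by
  rw [HasDegree, HasDegree, Icoeff_neg_swap]

end Degree

/-- The degree of the tetrahedron index is
`δ(m,e) = (1/2)(m₊(m+e)₊ + (-m)₊ e₊ + (-e)₊(-e-m)₊ + max{0,m,-e})`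
in `q`-units, i.e. `2δ(m,e)` in `t = q^{1/2}`-units, where `x₊ = max{x,0}`. -/
theorem degree_IDelta (m e : ℤ) :
    HasDegree m e
      (max m 0 * max (m + e) 0 + max (-m) 0 * max e 0 +
        max (-e) 0 * max (-e - m) 0 + max 0 (max m (-e))) := by
  change HasDegree m e (tetDegree m e)
  rcases le_or_gt m (-e).toNat with h | h
  · rw [tetDegree_eq_summandExp h]
    exact hasDegree_summandExp h
  · rw [← hasDegree_neg_swap_iff, ← tetDegree_neg_swap, tetDegree_eq_summandExp (by omega)]
    exact hasDegree_summandExp (by omega)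
end

section
/- Let $f: \mathbb{Z}^2 \to \mathbb{Z}((q^{1/2}))$ satisfy both recursions $q^{e/2} f(m+1,e) + q^{-m/2} f(m,e+1) = f(m,e)$ and $q^{e/2} f(m-1,e) + q^{-m/2} f(m,e-1) = f(m,e)$ for all integers $m,e$. Then $f$ also satisfies $f(m,e+1) + (q^{e+m/2} - q^{-m/2} - q^{m/2}) f(m,e) + f(m,e-1) = 0$ for all integers $m,e$. -/
/- Elements of `ℤ((q^{1/2}))` are Laurent series in the variable `t = q^{1/2}`,
i.e. elements of `LaurentSeries ℤ`.  The monomial `q^{a/2} = t^a` is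
`HahnSeries.single a 1`. -/

/-- A function satisfying both basic recursions of a tetrahedron index
satisfies the three-term recursion
`f(m,e+1) + (q^{e+m/2} - q^{-m/2} - q^{m/2}) f(m,e) + f(m,e-1) = 0`. -/
theorem three_term_rec_e (f : ℤ → ℤ → LaurentSeries ℤ)
    (h1 : ∀ m e : ℤ, HahnSeries.single e (1 : ℤ) * f (m + 1) e +
      HahnSeries.single (-m) (1 : ℤ) * f m (e + 1) = f m e)
    (h2 : ∀ m e : ℤ, HahnSeries.single e (1 : ℤ) * f (m - 1) e +
      HahnSeries.single (-m) (1 : ℤ) * f m (e - 1) = f m e) :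
    ∀ m e : ℤ,
      f m (e + 1) +
        (HahnSeries.single (2 * e + m) (1 : ℤ) - HahnSeries.single (-m) (1 : ℤ) -
          HahnSeries.single m (1 : ℤ)) * f m e + f m (e - 1) = 0 := by
  intro m e
  have hS : ∀ a b : ℤ, (HahnSeries.single a (1 : ℤ) : LaurentSeries ℤ) *
      HahnSeries.single b (1 : ℤ) = HahnSeries.single (a + b) (1 : ℤ) := by
    intro a b
    rw [HahnSeries.single_mul_single, one_mul]
  have A := h1 m e
  have B := h2 (m + 1) e
  have he : e - 1 + 1 = e := by ring
  have hm : m + 1 - 1 = m := by ring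
  rw [hm] at B
  have C := h1 m (e - 1)
  rw [he] at C
  have q1 : (HahnSeries.single m (1 : ℤ) : LaurentSeries ℤ) *
      HahnSeries.single (-m) (1 : ℤ) = 1 := by
    rw [hS, add_neg_cancel, HahnSeries.single_zero_one]
  have q2 : (HahnSeries.single m (1 : ℤ) : LaurentSeries ℤ) *
      HahnSeries.single e (1 : ℤ) = HahnSeries.single (e + m) (1 : ℤ) := by
    rw [hS, add_comm]
  have q3 : (HahnSeries.single (e + m) (1 : ℤ) : LaurentSeries ℤ) *
      HahnSeries.single e (1 : ℤ) = HahnSeries.single (2 * e + m) (1 : ℤ) := by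
    rw [hS]; ring_nf
  have q4 : (HahnSeries.single (e + m) (1 : ℤ) : LaurentSeries ℤ) *
      HahnSeries.single (-(m + 1)) (1 : ℤ) = HahnSeries.single (e - 1) (1 : ℤ) := by
    rw [hS]; ring_nf
  linear_combination (HahnSeries.single m (1 : ℤ) : LaurentSeries ℤ) * A +
    (HahnSeries.single (e + m) (1 : ℤ) : LaurentSeries ℤ) * B - C -
    f m (e + 1) * q1 - f (m + 1) e * q2 - f m e * q3 - f (m + 1) (e - 1) * q4
end

section
/- Let $f: \mathbb{Z}^2 \to \mathbb{Z}((q^{1/2}))$ satisfy both recursions $q^{e/2} f(m+1,e) + q^{-m/2} f(m,e+1) = f(m,e)$ and $q^{e/2} f(m-1,e) + q^{-m/2} f(m,e-1) = f(m,e)$ for all integers $m,e$. Then $f$ also satisfies $f(m+1,e) + (q^{-e/2 - m} - q^{-e/2} - q^{e/2}) f(m,e) + f(m-1,e) = 0$ for all integers $m,e$. -/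
/- Elements of `ℤ((q^{1/2}))` are Laurent series in the variable `t = q^{1/2}`,
i.e. elements of `LaurentSeries ℤ`.  The monomial `q^{a/2} = t^a` is
`HahnSeries.single a 1`. -/

/-- A function satisfying both basic recursions of a tetrahedron index
satisfies the three-term recursion
`f(m+1,e) + (q^{-e/2-m} - q^{-e/2} - q^{e/2}) f(m,e) + f(m-1,e) = 0`. -/
theorem three_term_rec_m (f : ℤ → ℤ → LaurentSeries ℤ)
    (h1 : ∀ m e : ℤ, HahnSeries.single e (1 : ℤ) * f (m + 1) e +
      HahnSeries.single (-m) (1 : ℤ) * f m (e + 1) = f m e)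
    (h2 : ∀ m e : ℤ, HahnSeries.single e (1 : ℤ) * f (m - 1) e +
      HahnSeries.single (-m) (1 : ℤ) * f m (e - 1) = f m e) :
    ∀ m e : ℤ,
      f (m + 1) e +
        (HahnSeries.single (-e - 2 * m) (1 : ℤ) - HahnSeries.single (-e) (1 : ℤ) -
          HahnSeries.single e (1 : ℤ)) * f m e + f (m - 1) e = 0 := by
  intro m e
  have key : ∀ a b c : ℤ, a + b = c →
      (HahnSeries.single a (1 : ℤ) : LaurentSeries ℤ) * HahnSeries.single b 1 =
        HahnSeries.single c 1 := by
    intro a b c h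
    rw [HahnSeries.single_mul_single, one_mul, h]
  have E1 := h1 m e
  have E2 := h2 m e
  have E3 := h1 (m-1) e
  have E4 := h2 (m+1) e
  have E5 := h2 m (e+1)
  have E6 := h1 m (e-1)
  rw [show m - 1 + 1 = m from by ring] at E3
  rw [show m + 1 - 1 = m from by ring] at E4
  rw [show e + 1 - 1 = e from by ring] at E5
  rw [show e - 1 + 1 = e from by ring] at E6
  have r1 := key (-m-e) (e+1) (-(m-1)) (by ring)
  have r2 := key (-m-e) (e-1) (-(m+1)) (by ring)
  have r3 := key (-e) (-m) (-m-e) (by ring)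
  have r4 : (HahnSeries.single (-e) (1 : ℤ) : LaurentSeries ℤ) * HahnSeries.single e 1 = 1 := by
    rw [key (-e) e 0 (by ring)]
    simp
  have r5 := key (-m-e) (-m) (-e-2*m) (by ring)
  have aux : (2 : LaurentSeries ℤ) *
      (f (m + 1) e +
        (HahnSeries.single (-e - 2 * m) (1 : ℤ) - HahnSeries.single (-e) (1 : ℤ) -
          HahnSeries.single e (1 : ℤ)) * f m e + f (m - 1) e) = 0 := by
    linear_combination (-1 : LaurentSeries ℤ) * E3 + (-1 : LaurentSeries ℤ) * E4 +
      (HahnSeries.single (-m-e) (1:ℤ) : LaurentSeries ℤ) * E5 +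
      (HahnSeries.single (-m-e) (1:ℤ) : LaurentSeries ℤ) * E6 +
      (HahnSeries.single (-e) (1:ℤ) : LaurentSeries ℤ) * E1 +
      (HahnSeries.single (-e) (1:ℤ) : LaurentSeries ℤ) * E2 -
      (f (m + 1) e + f (m - 1) e) * r4 - 2 * f m e * r5 -
      (f m (e + 1) + f m (e - 1)) * r3 - f (m - 1) (e + 1) * r1 - f (m + 1) (e - 1) * r2
  have h2ne : (2 : LaurentSeries ℤ) ≠ 0 := by
    intro h
    have := congrArg (fun x : LaurentSeries ℤ => x.coeff 0) h
    rw [show (2 : LaurentSeries ℤ) = 1 + 1 from by norm_num] at this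
    simp [HahnSeries.coeff_add, HahnSeries.coeff_one] at this
  exact (mul_eq_zero.mp aux).resolve_left h2ne
end

section
/- Let $V$ be the set of functions $f: \mathbb{Z}^2 \to \mathbb{Z}((q^{1/2}))$ satisfying both recursions $q^{e/2} f(m+1,e) + q^{-m/2} f(m,e+1) = f(m,e)$ and $q^{e/2} f(m-1,e) + q^{-m/2} f(m,e-1) = f(m,e)$ for all integers $m,e$. Define $(Sf)(m,e) = (-q^{1/2})^{-e} f(e,-e-m)$. If $f \in V$ then $Sf \in V$. -/
/-!
Write `t = q^{1/2}` and `ε e = (-1)^e`. Expanding the `d`-recursion of `Sf` at `(m, e)` gives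
`ε e (f(e, -e-m-d) - t^{-e-m-d} f(e+d, -e-m-d))`, since `ε (e + d) = -ε e` for odd `d`; by the
`d`-recursion of `f` at `(e, -e-m-d)` the bracket is `t^{-e} f(e, -e-m)`, i.e. the sum is `Sf(m, e)`.
Both recursions defining `V` are the cases `d = 1` and `d = -1`.
-/

/- Elements of `ℤ((q^{1/2}))` are Laurent series in the variable `t = q^{1/2}`,
i.e. elements of `LaurentSeries ℤ`.  The monomial `q^{a/2} = t^a` is
`HahnSeries.single a 1`, and `(-q^{1/2})^{-e} = (-1)^e q^{-e/2}` is
`HahnSeries.single (-e) ((-1)^e.natAbs)`. -/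

/-- The operator `(Sf)(m,e) = (-q^{1/2})^{-e} f(e, -e-m)`. -/
noncomputable def Sop (f : ℤ → ℤ → LaurentSeries ℤ) : ℤ → ℤ → LaurentSeries ℤ :=
  fun m e => HahnSeries.single (-e) ((-1 : ℤ) ^ e.natAbs) * f e (-e - m)

open HahnSeries

lemma neg_one_pow_natAbs_add_of_odd {d : ℤ} (hd : Odd d) (e : ℤ) :
    (-1 : ℤ) ^ (e + d).natAbs = -(-1) ^ e.natAbs := by
  rw [← Int.coe_negOnePow, ← Int.coe_negOnePow, Int.negOnePow_add, Int.negOnePow_odd _ hd]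
  simp

def SatisfiesRecursion (d : ℤ) (f : ℤ → ℤ → LaurentSeries ℤ) : Prop :=
  ∀ m e : ℤ, single e (1 : ℤ) * f (m + d) e + single (-m) (1 : ℤ) * f m (e + d) = f m e

theorem satisfiesRecursion_Sop {d : ℤ} (hd : Odd d) {f : ℤ → ℤ → LaurentSeries ℤ}
    (hf : SatisfiesRecursion d f) : SatisfiesRecursion d (Sop f) := by
  intro m e
  have key := hf e (-e - m - d)
  rw [sub_add_cancel] at key
  simp only [Sop, ← mul_assoc, single_mul_single, neg_one_pow_natAbs_add_of_odd hd, one_mul]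
  rw [show -e - (m + d) = -e - m - d by ring, show -(e + d) - m = -e - m - d by ring, ← key]
  simp only [mul_add, ← mul_assoc, single_mul_single, mul_one, single_neg]
  rw [show e + -e + (-e - m - d) = -m + -(e + d) by ring, show e + -e + -e = -e by ring]
  ring

/-- If `f` satisfies both basic recursions of a tetrahedron index
(i.e. `f ∈ V`), then so does `Sf`. -/
theorem Sop_mem_V (f : ℤ → ℤ → LaurentSeries ℤ)
    (h1 : ∀ m e : ℤ, HahnSeries.single e (1 : ℤ) * f (m + 1) e +
      HahnSeries.single (-m) (1 : ℤ) * f m (e + 1) = f m e)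
    (h2 : ∀ m e : ℤ, HahnSeries.single e (1 : ℤ) * f (m - 1) e +
      HahnSeries.single (-m) (1 : ℤ) * f m (e - 1) = f m e) :
    (∀ m e : ℤ, HahnSeries.single e (1 : ℤ) * Sop f (m + 1) e +
      HahnSeries.single (-m) (1 : ℤ) * Sop f m (e + 1) = Sop f m e) ∧
    (∀ m e : ℤ, HahnSeries.single e (1 : ℤ) * Sop f (m - 1) e +
      HahnSeries.single (-m) (1 : ℤ) * Sop f m (e - 1) = Sop f m e) := by
  have h2' : SatisfiesRecursion (-1) f := by
    simpa only [SatisfiesRecursion, ← sub_eq_add_neg] using h2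
  have hS2 := satisfiesRecursion_Sop odd_neg_one h2'
  exact ⟨satisfiesRecursion_Sop odd_one h1,
    by simpa only [SatisfiesRecursion, ← sub_eq_add_neg] using hS2⟩
end

section
/- Let $f: \mathbb{Z}^2 \to \mathbb{Z}((q^{1/2}))$ satisfy both recursions $q^{e/2} f(m+1,e) + q^{-m/2} f(m,e+1) = f(m,e)$ and $q^{e/2} f(m-1,e) + q^{-m/2} f(m,e-1) = f(m,e)$ for all integers $m,e$. Then $f$ satisfies the triality identity $f(m,e) = (-q^{1/2})^{-e} f(e, -e-m)$ for all integers $m,e$ (assuming additionally that $f$ is determined by its values $f(0,0), f(1,0)$ via the module structure, as holds for all elements of $V$). -/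
/-!
Write `S f (m, e) = (-1)^e q^{-e/2} f(e, -e-m)`. Each basic recursion for `S f` at `(m, e)` is
the same recursion for `f` at `(e, -e-m∓1)`, multiplied by `(-1)^e q^{-e/2}`; so `S f` again
satisfies both recursions. Moreover `S f` agrees with `f` at `(0,0)` trivially, and at `(1,0)`,
where `S f (1, 0) = f(0,-1)`, because the two recursions express `f(0,-1)` and `f(1,0)` alike as
`f(0,0) + q^{-1/2} f(1,-1)`.
Since a solution is determined by these two values, `S f = f`.
-/

lemma AddChar.map_mul_map_neg {G M : Type*} [AddGroup G] [Monoid M] (ψ : AddChar G M) (a : G) :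
    ψ a * ψ (-a) = 1 := by
  rw [← ψ.map_add_eq_mul, add_neg_cancel, ψ.map_zero_eq_one]

namespace TetrahedronIndex

-- `ψ n` plays the role of `q^{n/2}`.
variable {A : Type*} [CommRing A] (ψ : AddChar ℤ A)

def RecPlus (f : ℤ → ℤ → A) : Prop :=
  ∀ m e : ℤ, ψ e * f (m + 1) e + ψ (-m) * f m (e + 1) = f m e

def RecMinus (f : ℤ → ℤ → A) : Prop :=
  ∀ m e : ℤ, ψ e * f (m - 1) e + ψ (-m) * f m (e - 1) = f m e

/-- The operator `S`, `(S f)(m, e) = (-q^{1/2})^{-e} f(e, -e-m)`. -/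
def trialityMap (f : ℤ → ℤ → A) (m e : ℤ) : A :=
  (e.negOnePow : A) * ψ (-e) * f e (-e - m)

variable {ψ}

lemma recPlus_trialityMap {f : ℤ → ℤ → A} (hf : RecPlus ψ f) :
    RecPlus ψ (trialityMap ψ f) := by
  intro m e
  have h := hf e (-e - m - 1)
  rw [sub_add_cancel] at h
  have hψ : ψ (-m) * ψ (-(e + 1)) = ψ (-e - m - 1) := by
    rw [← AddChar.map_add_eq_mul]; ring_nf
  simp only [trialityMap, Int.negOnePow_succ, Units.val_neg, Int.cast_neg,
    show -e - (m + 1) = -e - m - 1 by ring, show -(e + 1) - m = -e - m - 1 by ring]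
  linear_combination ((e.negOnePow : A) * f e (-e - m - 1)) * ψ.map_mul_map_neg e
    - ((e.negOnePow : A) * f (e + 1) (-e - m - 1)) * hψ - (e.negOnePow : A) * h

lemma recMinus_trialityMap {f : ℤ → ℤ → A} (hf : RecMinus ψ f) :
    RecMinus ψ (trialityMap ψ f) := by
  intro m e
  have h := hf e (-e - m + 1)
  rw [add_sub_cancel_right] at h
  have hψ : ψ (-m) * ψ (-(e - 1)) = ψ (-e - m + 1) := by
    rw [← AddChar.map_add_eq_mul]; ring_nf
  simp only [trialityMap, Int.negOnePow_sub, Int.negOnePow_one, mul_neg, mul_one, Units.val_neg,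
    Int.cast_neg, show -e - (m - 1) = -e - m + 1 by ring, show -(e - 1) - m = -e - m + 1 by ring]
  linear_combination ((e.negOnePow : A) * f e (-e - m + 1)) * ψ.map_mul_map_neg e
    - ((e.negOnePow : A) * f (e - 1) (-e - m + 1)) * hψ - (e.negOnePow : A) * h

lemma trialityMap_zero_zero (f : ℤ → ℤ → A) : trialityMap ψ f 0 0 = f 0 0 := by
  simp [trialityMap]

lemma trialityMap_one_zero {f : ℤ → ℤ → A} (hp : RecPlus ψ f) (hm : RecMinus ψ f) :
    trialityMap ψ f 1 0 = f 1 0 := by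
  have h₁ := hp 0 (-1)
  have h₂ := hm 1 0
  norm_num [trialityMap] at h₁ h₂ ⊢
  linear_combination h₂ - h₁

end TetrahedronIndex

namespace LaurentSeries

open TetrahedronIndex

variable {R : Type*} [CommRing R]

variable (R) in
noncomputable def singleOneAddChar : AddChar ℤ (LaurentSeries R) where
  toFun n := HahnSeries.single n 1
  map_zero_eq_one' := HahnSeries.single_zero_one
  map_add_eq_mul' a b := by rw [HahnSeries.single_mul_single, mul_one]

/- Stated separately so that matching `RecPlus (singleOneAddChar R) (trialityMap _ f)` against
its unfolded form does not unfold `trialityMap`, which times out. -/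
lemma recPlus_singleOneAddChar_iff {f : ℤ → ℤ → LaurentSeries R} :
    RecPlus (singleOneAddChar R) f ↔ ∀ m e : ℤ, HahnSeries.single e (1 : R) * f (m + 1) e +
      HahnSeries.single (-m) (1 : R) * f m (e + 1) = f m e := Iff.rfl

lemma recMinus_singleOneAddChar_iff {f : ℤ → ℤ → LaurentSeries R} :
    RecMinus (singleOneAddChar R) f ↔ ∀ m e : ℤ, HahnSeries.single e (1 : R) * f (m - 1) e +
      HahnSeries.single (-m) (1 : R) * f m (e - 1) = f m e := Iff.rfl

lemma negOnePow_mul_single_one (e : ℤ) :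
    (e.negOnePow : LaurentSeries R) * HahnSeries.single (-e) 1 =
      HahnSeries.single (-e) ((-1 : R) ^ e.natAbs) := by
  rw [Int.coe_negOnePow, show (-1 : LaurentSeries R) = HahnSeries.C (-1) by simp, ← map_pow,
    HahnSeries.C_apply, HahnSeries.single_mul_single, zero_add, mul_one]

end LaurentSeries

open TetrahedronIndex LaurentSeries

/-- Triality: if `f` satisfies both basic recursions of a tetrahedron index,
and (as holds for every element of `V`) `f` is determined inside `V` by its
values `f(0,0)` and `f(1,0)`, then `f(m,e) = (-q^{1/2})^{-e} f(e,-e-m)`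
for all integers `m, e`. -/
theorem triality (f : ℤ → ℤ → LaurentSeries ℤ)
    (h1 : ∀ m e : ℤ, HahnSeries.single e (1 : ℤ) * f (m + 1) e +
      HahnSeries.single (-m) (1 : ℤ) * f m (e + 1) = f m e)
    (h2 : ∀ m e : ℤ, HahnSeries.single e (1 : ℤ) * f (m - 1) e +
      HahnSeries.single (-m) (1 : ℤ) * f m (e - 1) = f m e)
    (hdet : ∀ g : ℤ → ℤ → LaurentSeries ℤ,
      (∀ m e : ℤ, HahnSeries.single e (1 : ℤ) * g (m + 1) e +
        HahnSeries.single (-m) (1 : ℤ) * g m (e + 1) = g m e) →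
      (∀ m e : ℤ, HahnSeries.single e (1 : ℤ) * g (m - 1) e +
        HahnSeries.single (-m) (1 : ℤ) * g m (e - 1) = g m e) →
      g 0 0 = f 0 0 → g 1 0 = f 1 0 → g = f) :
    ∀ m e : ℤ,
      f m e = HahnSeries.single (-e) ((-1 : ℤ) ^ e.natAbs) * f e (-e - m) := by
  have hp := recPlus_singleOneAddChar_iff.2 h1
  have hm := recMinus_singleOneAddChar_iff.2 h2
  have hS : trialityMap (singleOneAddChar ℤ) f = f :=
    hdet _ (recPlus_singleOneAddChar_iff.1 (recPlus_trialityMap hp))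
      (recMinus_singleOneAddChar_iff.1 (recMinus_trialityMap hm))
      (trialityMap_zero_zero f) (trialityMap_one_zero hp hm)
  intro m e
  rw [← negOnePow_mul_single_one]
  exact (congrFun₂ hS m e).symm
end

section
/- Fix positive real numbers $\alpha, \beta > 0$ with $\alpha + \beta < 1/2$, and let $\gamma = \min\{\alpha, \beta, 1/2 - \alpha - \beta\}$. Then for all integers $m, e$: $\delta(m,e) - \beta m + \alpha e \geq \gamma \max\{|m|, |e|, |m+e|\}$, where $\delta(m,e) = \frac{1}{2}( m_+ (m+e)_+ + (-m)_+ e_+ + (-e)_+ (-e-m)_+ + \max\{0, m, -e\})$ and $x_+ = \max\{0,x\}$. -/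
lemma degree_lower_bound_aux (α β : ℝ) (hα : 0 < α) (hβ : 0 < β)
    (hαβ : α + β < 1 / 2) (x y : ℝ) :
    min α (min β (1 / 2 - α - β)) * max |x| (max |y| |x + y|) ≤
      (1 / 2) * (max x 0 * max (x + y) 0 + max (-x) 0 * max y 0 +
            max (-y) 0 * max (-y - x) 0 + max 0 (max x (-y))) -
        β * x + α * y := by
  set γ := min α (min β (1 / 2 - α - β)) with hγdef
  have hγα : γ ≤ α := min_le_left _ _
  have hγβ : γ ≤ β := (min_le_right _ _).trans (min_le_left _ _)
  have hγc : γ ≤ 1 / 2 - α - β := (min_le_right _ _).trans (min_le_right _ _)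
  have hγ0 : 0 ≤ γ := le_min hα.le (le_min hβ.le (by linarith))
  rcases le_total 0 x with hx | hx <;> rcases le_total 0 y with hy | hy
  · -- 0 ≤ x, 0 ≤ y
    have hs : 0 ≤ x + y := by linarith
    rw [abs_of_nonneg hx, abs_of_nonneg hy, abs_of_nonneg hs,
      max_eq_right (by linarith : y ≤ x + y),
      max_eq_right (by linarith : x ≤ x + y),
      max_eq_left hx, max_eq_left hs,
      max_eq_right (by linarith : -x ≤ 0), max_eq_left hy,
      max_eq_right (by linarith : -y ≤ 0),
      max_eq_right (by linarith : -y - x ≤ 0),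
      max_eq_left (by linarith : -y ≤ x),
      max_eq_right hx]
    have h1 : γ * y ≤ α * y := mul_le_mul_of_nonneg_right hγα hy
    have h2 : γ * x ≤ (1 / 2 - α - β) * x := mul_le_mul_of_nonneg_right hγc hx
    have h3 : 0 ≤ x * (x + y) := mul_nonneg hx hs
    have h4 : 0 ≤ α * x := mul_nonneg hα.le hx
    nlinarith
  · -- 0 ≤ x, y ≤ 0
    rcases le_total 0 (x + y) with hs | hs
    · -- max = x
      rw [abs_of_nonneg hx, abs_of_nonpos hy, abs_of_nonneg hs,
        max_eq_left (max_le (by linarith : -y ≤ x) (by linarith : x + y ≤ x)),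
        max_eq_left hx, max_eq_left hs,
        max_eq_right (by linarith : -x ≤ 0), max_eq_right hy,
        max_eq_right (by linarith : -y - x ≤ 0),
        max_eq_left (by linarith : -y ≤ x), max_eq_right hx]
      have h1 : γ * x ≤ (1 / 2 - α - β) * x := mul_le_mul_of_nonneg_right hγc hx
      have h2 : α * (-y) ≤ α * x := mul_le_mul_of_nonneg_left (by linarith) hα.le
      have h3 : 0 ≤ x * (x + y) := mul_nonneg hx hs
      nlinarith
    · -- max = -y
      rw [abs_of_nonneg hx, abs_of_nonpos hy, abs_of_nonpos hs,
        max_eq_left (by linarith : -(x + y) ≤ -y),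
        max_eq_right (by linarith : x ≤ -y),
        max_eq_left hx, max_eq_right hs,
        max_eq_right (by linarith : -x ≤ 0), max_eq_right hy,
        max_eq_left (by linarith : (0:ℝ) ≤ -y),
        max_eq_left (by linarith : 0 ≤ -y - x),
        max_eq_right (by linarith : (0:ℝ) ≤ -y)]
      have h1 : γ * (-y) ≤ (1 / 2 - α - β) * (-y) :=
        mul_le_mul_of_nonneg_right hγc (by linarith)
      have h2 : β * x ≤ β * (-y) := mul_le_mul_of_nonneg_left (by linarith) hβ.le
      have h3 : 0 ≤ (-y) * (-y - x) := mul_nonneg (by linarith) (by linarith)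
      nlinarith
  · -- x ≤ 0, 0 ≤ y
    rcases le_total 0 (x + y) with hs | hs
    · -- max = y
      rw [abs_of_nonpos hx, abs_of_nonneg hy, abs_of_nonneg hs,
        max_eq_left (by linarith : x + y ≤ y),
        max_eq_right (by linarith : -x ≤ y),
        max_eq_right hx, max_eq_left hs,
        max_eq_left (by linarith : 0 ≤ -x), max_eq_left hy,
        max_eq_right (by linarith : -y ≤ 0),
        max_eq_right (by linarith : -y - x ≤ 0),
        max_eq_left (by linarith : -y ≤ x),
        max_eq_left (by linarith : x ≤ 0)]
      have h1 : γ * y ≤ α * y := mul_le_mul_of_nonneg_right hγα hy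
      have h2 : 0 ≤ (-x) * y := mul_nonneg (by linarith) hy
      have h3 : β * x ≤ 0 := mul_nonpos_of_nonneg_of_nonpos hβ.le hx
      nlinarith
    · -- max = -x
      rw [abs_of_nonpos hx, abs_of_nonneg hy, abs_of_nonpos hs,
        max_eq_left (max_le (by linarith : y ≤ -x) (by linarith : -(x + y) ≤ -x)),
        max_eq_right hx, max_eq_right hs,
        max_eq_left (by linarith : 0 ≤ -x), max_eq_left hy,
        max_eq_right (by linarith : -y ≤ 0),
        max_eq_left (max_le hx (by linarith : -y ≤ (0:ℝ)))]
      rw [zero_mul]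
      have h1 : γ * (-x) ≤ β * (-x) := mul_le_mul_of_nonneg_right hγβ (by linarith)
      have h2 : 0 ≤ (-x) * y := mul_nonneg (by linarith) hy
      have h3 : 0 ≤ α * y := mul_nonneg hα.le hy
      nlinarith
  · -- x ≤ 0, y ≤ 0
    have hs : x + y ≤ 0 := by linarith
    rw [abs_of_nonpos hx, abs_of_nonpos hy, abs_of_nonpos hs,
      max_eq_right (by linarith : -y ≤ -(x + y)),
      max_eq_right (by linarith : -x ≤ -(x + y)),
      max_eq_right hx, max_eq_right hs,
      max_eq_left (by linarith : 0 ≤ -x), max_eq_right hy,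
      max_eq_left (by linarith : 0 ≤ -y),
      max_eq_left (by linarith : 0 ≤ -y - x),
      max_eq_right (by linarith : x ≤ -y),
      max_eq_right (by linarith : 0 ≤ -y)]
    have h1 : γ * (-(x + y)) ≤ β * (-(x + y)) :=
      mul_le_mul_of_nonneg_right hγβ (by linarith)
    have h2 : 0 ≤ (-y) * (-y - x) := mul_nonneg (by linarith) (by linarith)
    have h3 : 0 ≤ (1 / 2 - α - β) * (-y) := mul_nonneg (by linarith) (by linarith)
    nlinarith

/-- For `0 < α`, `0 < β` with `α + β < 1/2` and `γ = min {α, β, 1/2 - α - β}`,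
one has `δ(m,e) - β m + α e ≥ γ max{|m|, |e|, |m+e|}` for all integers `m, e`,
where `δ(m,e) = (1/2)(m₊(m+e)₊ + (-m)₊ e₊ + (-e)₊(-e-m)₊ + max{0,m,-e})`. -/
theorem degree_lower_bound (α β : ℝ) (hα : 0 < α) (hβ : 0 < β)
    (hαβ : α + β < 1 / 2) (m e : ℤ) :
    min α (min β (1 / 2 - α - β)) *
        max |(m : ℝ)| (max |(e : ℝ)| |(m : ℝ) + (e : ℝ)|) ≤
      (1 / 2) *
          (max (m : ℝ) 0 * max ((m : ℝ) + (e : ℝ)) 0 +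
            max (-(m : ℝ)) 0 * max (e : ℝ) 0 +
            max (-(e : ℝ)) 0 * max (-(e : ℝ) - (m : ℝ)) 0 +
            max 0 (max (m : ℝ) (-(e : ℝ)))) -
        β * (m : ℝ) + α * (e : ℝ) := by
  exact degree_lower_bound_aux α β hα hβ hαβ (m : ℝ) (e : ℝ)
end

section
/- Pentagon identity for the series $F_e$: in the ring $\mathbb{Z}((x_1, x_2, q))$, for all integers $e_1, e_2$, $q^{e_1 e_2} F_{e_1}(q^{e_2} x_1) F_{e_2}(q^{e_1} x_2) = \sum_{e_3 \in \mathbb{Z}} (x_1 x_2 q)^{e_3} F_{e_1+e_3}(x_1) F_{e_2+e_3}(x_2) F_{e_3}(x_1 x_2)$. -/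
/- The pentagon identity holds in the formal Laurent ring `ℤ((x₁,x₂,q))`; we
render it analytically over `ℂ`, on the domain `|q| < 1`, `|x₁x₂q| < 1` with
`q, x₁, x₂ ≠ 0` (where all variables are invertible, as they are in the formal
Laurent ring, and where both sides converge). -/

/-- `(q;q)_n = ∏_{i=1}^n (1 - q^i)`. -/
noncomputable def qPochN (q : ℂ) (n : ℕ) : ℂ :=
  ∏ i ∈ Finset.range n, (1 - q ^ (i + 1))

/-- `F_e(x) = ∑_{n ≥ max(0,-e)} (-1)^n q^{n(n+1)/2} x^n / ((q)_n (q)_{n+e})`. -/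
noncomputable def Fser (q : ℂ) (e : ℤ) (x : ℂ) : ℂ :=
  ∑' n : ℕ,
    if 0 ≤ (n : ℤ) + e then
      (-1) ^ n * q ^ (n * (n + 1) / 2) * x ^ n /
        (qPochN q n * qPochN q ((n : ℤ) + e).toNat)
    else 0

open Finset

namespace Pent

def tri : ℕ → ℕ
  | 0 => 0
  | n+1 => tri n + (n+1)

lemma tri_succ (n : ℕ) : tri (n+1) = tri n + (n+1) := rfl

lemma two_tri (n : ℕ) : 2 * tri n = n * (n+1) := by
  induction n with
  | zero => rfl
  | succ n ih => rw [tri_succ]; ring_nf; ring_nf at ih; omega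

lemma tri_eq (n : ℕ) : n * (n+1) / 2 = tri n := by
  have := two_tri n; omega

lemma tri_add (m n : ℕ) : tri (m+n) = tri m + tri n + m*n := by
  induction n with
  | zero => simp [tri]
  | succ n ih =>
    have h : m + (n+1) = (m+n) + 1 := by omega
    rw [h, tri_succ, ih, tri_succ]; ring

lemma le_tri (n : ℕ) : n ≤ tri n := by
  induction n with
  | zero => simp [tri]
  | succ n ih => rw [tri_succ]; omega

noncomputable def gb (q : ℂ) : ℕ → ℕ → ℂ
  | _, 0 => 1
  | 0, _+1 => 0
  | a+1, j+1 => gb q a j + q^(j+1) * gb q a (j+1)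

variable (q : ℂ)

lemma gb_zero' (b : ℕ) : gb q b 0 = 1 := by cases b <;> rfl

lemma gb_succ (a j : ℕ) : gb q (a+1) (j+1) = gb q a j + q^(j+1) * gb q a (j+1) := rfl

lemma gb_zero : ∀ {a j : ℕ}, a < j → gb q a j = 0 := by
  intro a
  induction a with
  | zero => intro j h; match j, h with | j+1, _ => rfl
  | succ a ih =>
    intro j h
    match j, h with
    | j+1, h =>
      rw [gb_succ, ih (by omega), ih (by omega)]; ring

lemma gb_diag : ∀ a : ℕ, gb q a a = 1 := by
  intro a
  induction a with
  | zero => rfl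
  | succ a ih =>
    rw [gb_succ, ih, gb_zero q (by omega)]; ring

lemma gb_mul : ∀ b j : ℕ, gb q b j * (1 - q^(b-j)) = gb q b (j+1) * (1 - q^(j+1)) := by
  intro b
  induction b with
  | zero =>
    intro j
    cases j with
    | zero => simp [gb]
    | succ j => rw [gb_zero q (by omega), gb_zero q (by omega)]; ring
  | succ b ih =>
    intro j
    cases j with
    | zero =>
      have h0 := ih 0
      rw [gb_zero'] at h0 ⊢
      rw [gb_succ, gb_zero', Nat.sub_zero]
      simp only [Nat.sub_zero] at h0
      linear_combination q * h0
    | succ i =>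
      rcases lt_or_ge i b with hib | hib
      · rcases Nat.lt_or_ge (i+1) (b+1) with h' | h'
        · have h1 := ih i
          have h2 := ih (i+1)
          have e1 : b+1-(i+1) = b-i := by omega
          have key : q^(i+1) * q^(b-i) = q^(b+1) := by
            rw [← pow_add]; congr 1; omega
          have key2 : q^(i+1+1) * q^(b-(i+1)) = q^(b+1) := by
            rw [← pow_add]; congr 1; omega
          rw [e1, gb_succ, gb_succ]
          linear_combination h1 + q^(i+1+1) * h2 + gb q b (i+1) * key2 - gb q b (i+1) * key
        · omega
      · rcases Nat.eq_or_lt_of_le hib with rfl | hib'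
        · -- i = b
          rw [gb_zero q (show b+1 < b+1+1 by omega)]
          have : b+1-(b+1) = 0 := by omega
          rw [this]; simp
        · rw [gb_zero q (show b+1 < i+1 by omega), gb_zero q (show b+1 < i+1+1 by omega)]
          ring

lemma qPochN_succ (n : ℕ) : qPochN q (n+1) = qPochN q n * (1 - q^(n+1)) :=
  Finset.prod_range_succ _ _

lemma gb_key : ∀ a : ℕ, ∀ j ≤ a,
    gb q a j * (qPochN q j * qPochN q (a-j)) = qPochN q a := by
  intro a
  induction a with
  | zero => intro j hj; interval_cases j; simp [gb, qPochN]
  | succ a ih =>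
    intro j hj
    cases j with
    | zero =>
      simp only [gb_zero', Nat.sub_zero, qPochN, Finset.prod_range_zero]
      ring
    | succ i =>
      rcases Nat.eq_or_lt_of_le hj with h' | h'
      · -- i+1 = a+1, i.e. i = a
        have hi : i = a := by omega
        subst hi
        rw [gb_diag, Nat.sub_self]
        simp [qPochN]
      · -- i < a
        have hia : i < a := by omega
        have h1 := ih i (by omega)
        have h2 := ih (i+1) (by omega)
        have e1 : a+1-(i+1) = (a-i-1)+1 := by omega
        have e2 : a-(i+1) = a-i-1 := by omega
        have e3 : a-i = (a-i-1)+1 := by omega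
        rw [gb_succ, e1, qPochN_succ, qPochN_succ]
        rw [e2] at h2
        rw [e3, qPochN_succ] at h1
        have key : q^(i+1) * q^(a-i-1+1) = q^(a+1) := by
          rw [← pow_add]; congr 1; omega
        rw [qPochN_succ q a]
        rw [qPochN_succ] at h2
        linear_combination (1 - q^(i+1)) * h1 + q^(i+1) * (1 - q^(a-i-1+1)) * h2
          - qPochN q a * key

end Pent

namespace Pent
variable (q : ℂ)

lemma pascal2 (a j : ℕ) : gb q (a+1) (j+1) = gb q a (j+1) + q^(a-j) * gb q a j := by
  have h := gb_mul q a j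
  rw [gb_succ]; linear_combination h

noncomputable def vA (a b j : ℕ) : ℂ := q^((a-j)*(b-j)) * (gb q a j * gb q b j * qPochN q j)

lemma A_step (a b i : ℕ) :
    vA q (a+1) b (i+1) = q^(b-(i+1)) * vA q a b (i+1) + vA q a b i * (1 - q^(b-i)) := by
  unfold vA
  have e0 : a+1-(i+1) = a-i := by omega
  rw [e0, pascal2]
  have k3 := gb_mul q b i
  have k4 : qPochN q (i+1) = qPochN q i * (1 - q^(i+1)) := qPochN_succ q i
  rcases lt_or_ge i a with ha | ha
  · rcases lt_or_ge i b with hb | hb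
    · have k1 : q^((a-i)*(b-(i+1))) = q^(b-(i+1)) * q^((a-(i+1))*(b-(i+1))) := by
        rw [← pow_add]; congr 1
        have h : a - i = (a-(i+1))+1 := by omega
        rw [h]; ring
      have k2 : q^((a-i)*(b-(i+1))) * q^(a-i) = q^((a-i)*(b-i)) := by
        rw [← pow_add]; congr 1
        have h : b - i = (b-(i+1))+1 := by omega
        rw [h]; ring
      linear_combination (gb q a (i+1) * gb q b (i+1) * qPochN q (i+1)) * k1
        + (gb q a i * gb q b (i+1) * qPochN q (i+1)) * k2
        + (q^((a-i)*(b-i)) * gb q a i * gb q b (i+1)) * k4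
        - (q^((a-i)*(b-i)) * gb q a i * qPochN q i) * k3
    · rw [gb_zero q (show b < i+1 by omega), Nat.sub_eq_zero_of_le hb]
      simp
  · rcases Nat.eq_or_lt_of_le ha with rfl | ha'
    · rw [gb_zero q (show a < a+1 by omega), gb_diag, Nat.sub_self]
      simp only [Nat.zero_mul, pow_zero, zero_mul, one_mul, zero_add, mul_zero, zero_mul]
      linear_combination gb q b (a+1) * qPochN q (a+1) * (0:ℂ) + gb q b (a+1) * k4 - qPochN q a * k3
    · rw [gb_zero q (show a < i by omega), gb_zero q (show a < i+1 by omega)]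
      ring

lemma idA (a b : ℕ) : ∑ j ∈ range (a+1), vA q a b j = 1 := by
  induction a with
  | zero =>
    simp [vA, gb_zero', qPochN, gb]
  | succ a ih =>
    have hv : vA q a b (a+1) = 0 := by
      unfold vA; rw [gb_zero q (by omega)]; ring
    have hv0 : vA q (a+1) b 0 = q^(b-0) * vA q a b 0 := by
      unfold vA
      simp only [gb_zero']
      have h : q^((a+1-0)*(b-0)) = q^(b-0) * q^((a-0)*(b-0)) := by
        rw [← pow_add]; congr 1; simp; ring
      rw [h]; ring
    have h1 : ∑ j ∈ range (a+1+1), vA q (a+1) b j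
        = ∑ i ∈ range (a+1), (q^(b-(i+1)) * vA q a b (i+1) + vA q a b i * (1-q^(b-i)))
          + vA q (a+1) b 0 := by
      rw [Finset.sum_range_succ']
      exact congrArg₂ _ (Finset.sum_congr rfl fun i _ => A_step q a b i) rfl
    rw [h1, Finset.sum_add_distrib]
    have h2 : ∑ i ∈ range (a+1), q^(b-(i+1)) * vA q a b (i+1) + q^(b-0) * vA q a b 0
        = ∑ j ∈ range (a+1), q^(b-j) * vA q a b j := by
      rw [← Finset.sum_range_succ' (fun j => q^(b-j) * vA q a b j) (a+1),
        Finset.sum_range_succ]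
      rw [hv]; ring
    have h3 : ∑ j ∈ range (a+1), (q^(b-j) * vA q a b j + vA q a b j * (1-q^(b-j)))
        = ∑ j ∈ range (a+1), vA q a b j :=
      Finset.sum_congr rfl (fun j _ => by ring)
    rw [Finset.sum_add_distrib] at h3
    linear_combination h2 + h3 + ih + hv0
end Pent

namespace Pent
variable (q : ℂ)

noncomputable def wB (a b k : ℕ) : ℂ :=
  (-1)^k * q^(tri k - k) * (gb q a k * gb q b k * qPochN q k)

lemma B_step (a b i : ℕ) :
    wB q (a+1) b (i+1)
      = (-1)^(i+1) * q^(tri (i+1)) * (gb q a (i+1) * gb q b (i+1) * qPochN q (i+1))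
        + (-1)^(i+1) * q^(tri i) * (gb q a i * gb q b (i+1) * qPochN q (i+1)) := by
  unfold wB
  rw [gb_succ]
  have e1 : tri (i+1) - (i+1) = tri i := by have := tri_succ i; omega
  have e2 : q^(tri i) * q^(i+1) = q^(tri (i+1)) := by
    rw [← pow_add, ← tri_succ]
  rw [e1]
  linear_combination ((-1:ℂ))^(i+1) * gb q a (i+1) * gb q b (i+1) * qPochN q (i+1) * e2

lemma XplusY (a b i : ℕ) :
    (-1)^i * q^(tri i) * (gb q a i * gb q b i * qPochN q i)
      + (-1)^(i+1) * q^(tri i) * (gb q a i * gb q b (i+1) * qPochN q (i+1))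
    = q^b * wB q a b i := by
  unfold wB
  have k3 := gb_mul q b i
  have k4 : qPochN q (i+1) = qPochN q i * (1 - q^(i+1)) := qPochN_succ q i
  rcases le_or_gt i b with hb | hb
  · have e2 : q^b * q^(tri i - i) = q^(tri i + (b - i)) := by
      rw [← pow_add]; congr 1
      have := le_tri i; omega
    have e3 : q^(tri i) * q^(b-i) = q^(tri i + (b-i)) := by rw [← pow_add]
    have hs : (-1:ℂ)^(i+1) = -(-1)^i := by rw [pow_succ]; ring
    rw [hs]
    linear_combination - ((-1:ℂ))^i * q^(tri i) * gb q a i * gb q b (i+1) * k4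
      + ((-1:ℂ))^i * q^(tri i) * gb q a i * qPochN q i * k3
      + ((-1:ℂ))^i * gb q a i * gb q b i * qPochN q i * (e3 - e2)
  · rw [gb_zero q hb, gb_zero q (show b < i+1 by omega)]
    ring

lemma idB (a b : ℕ) : ∑ k ∈ range (a+1), wB q a b k = q^(a*b) := by
  induction a with
  | zero => simp [wB, gb_zero', qPochN, tri, gb]
  | succ a ih =>
    have hX : ∀ k, ((-1:ℂ))^k * q^(tri k) * (gb q a k * gb q b k * qPochN q k)
        = q^k * wB q a b k := by
      intro k
      unfold wB
      have : q^k * q^(tri k - k) = q^(tri k) := by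
        rw [← pow_add]; congr 1; have := le_tri k; omega
      linear_combination - ((-1:ℂ))^k * gb q a k * gb q b k * qPochN q k * this
    have hXz : ((-1:ℂ))^(a+1) * q^(tri (a+1)) * (gb q a (a+1) * gb q b (a+1) * qPochN q (a+1)) = 0 := by
      rw [gb_zero q (by omega)]; ring
    have h1 : ∑ k ∈ range (a+1+1), wB q (a+1) b k
        = ∑ i ∈ range (a+1),
            ((-1)^(i+1) * q^(tri (i+1)) * (gb q a (i+1) * gb q b (i+1) * qPochN q (i+1))
              + (-1)^(i+1) * q^(tri i) * (gb q a i * gb q b (i+1) * qPochN q (i+1)))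
          + wB q (a+1) b 0 := by
      rw [Finset.sum_range_succ']
      exact congrArg₂ _ (Finset.sum_congr rfl fun i _ => B_step q a b i) rfl
    have hw0 : wB q (a+1) b 0 = (-1)^0 * q^(tri 0) * (gb q a 0 * gb q b 0 * qPochN q 0) := by
      unfold wB; simp [gb_zero', tri]
    rw [h1, Finset.sum_add_distrib, hw0]
    have h2 : ∑ i ∈ range (a+1),
          (-1)^(i+1) * q^(tri (i+1)) * (gb q a (i+1) * gb q b (i+1) * qPochN q (i+1))
        + (-1)^0 * q^(tri 0) * (gb q a 0 * gb q b 0 * qPochN q 0)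
        = ∑ k ∈ range (a+1), (-1)^k * q^(tri k) * (gb q a k * gb q b k * qPochN q k) := by
      rw [← Finset.sum_range_succ'
        (fun k => ((-1:ℂ))^k * q^(tri k) * (gb q a k * gb q b k * qPochN q k)) (a+1),
        Finset.sum_range_succ, hXz]
      ring
    have h3 : ∑ i ∈ range (a+1),
          ((-1)^i * q^(tri i) * (gb q a i * gb q b i * qPochN q i)
            + (-1)^(i+1) * q^(tri i) * (gb q a i * gb q b (i+1) * qPochN q (i+1)))
        = ∑ i ∈ range (a+1), q^b * wB q a b i :=
      Finset.sum_congr rfl (fun i _ => XplusY q a b i)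
    rw [Finset.sum_add_distrib] at h3
    have h4 : ∑ i ∈ range (a+1), q^b * wB q a b i = q^b * ∑ i ∈ range (a+1), wB q a b i := by
      rw [Finset.mul_sum]
    have e5 : q^b * q^(a*b) = q^((a+1)*b) := by rw [← pow_add]; congr 1; ring
    linear_combination h2 + h3 + h4 + q^b * ih + e5
end Pent

namespace Pent

lemma expA (j s t : ℕ) : s*t + (tri (j+s) + tri (j+t) - (j+s)*(j+t)) = j + tri s + tri t := by
  rw [tri_add, tri_add]
  have hDZ : ((j:ℤ)+s)*((j:ℤ)+t) ≤ (tri j : ℤ) + tri s + (j:ℤ)*s + ((tri j : ℤ) + tri t + (j:ℤ)*t) := by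
    have h1 := two_tri j; have h2 := two_tri s; have h3 := two_tri t
    zify at h1 h2 h3
    nlinarith [sq_nonneg ((s:ℤ) - t), h1, h2, h3]
  have hD : (j+s)*(j+t) ≤ tri j + tri s + j*s + (tri j + tri t + j*t) := by
    exact_mod_cast hDZ
  zify [hD]
  have h := two_tri j
  zify at h
  linear_combination h

section
variable {q : ℂ} (hq : ‖q‖ < 1)

include hq

lemma one_sub_qpow_ne (n : ℕ) : (1 : ℂ) - q^(n+1) ≠ 0 := by
  intro h
  have h1 : q^(n+1) = 1 := by linear_combination -h
  have h2 : ‖q^(n+1)‖ < 1 := by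
    rw [norm_pow]
    exact pow_lt_one₀ (norm_nonneg q) hq (by omega)
  rw [h1] at h2; simp at h2

lemma Pq_ne (n : ℕ) : qPochN q n ≠ 0 := by
  unfold qPochN
  exact Finset.prod_ne_zero_iff.mpr fun i _ => one_sub_qpow_ne hq i

lemma idA_div (a b : ℕ) :
    ∑ j ∈ Finset.range (min a b + 1),
        q^(j + tri (a-j) + tri (b-j)) / (qPochN q (a-j) * qPochN q (b-j) * qPochN q j)
      = q^(tri a + tri b - a*b) / (qPochN q a * qPochN q b) := by
  have hA : ∑ j ∈ Finset.range (min a b + 1), vA q a b j = 1 := by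
    rw [← idA q a b]
    refine Finset.sum_subset (by intro x hx; simp at hx ⊢; omega) ?_
    intro x hx hx'
    simp only [Finset.mem_range] at hx hx'
    unfold vA
    rw [gb_zero q (show b < x by omega)]
    ring
  have hterm : ∀ j ∈ Finset.range (min a b + 1),
      q^(j + tri (a-j) + tri (b-j)) / (qPochN q (a-j) * qPochN q (b-j) * qPochN q j)
        = vA q a b j * (q^(tri a + tri b - a*b) / (qPochN q a * qPochN q b)) := by
    intro j hj
    simp only [Finset.mem_range] at hj
    have hja : j ≤ a := by omega
    have hjb : j ≤ b := by omega
    have g1 := gb_key q a j hja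
    have g2 := gb_key q b j hjb
    have eE : q^((a-j)*(b-j)) * q^(tri a + tri b - a*b) = q^(j + tri (a-j) + tri (b-j)) := by
      rw [← pow_add]
      congr 1
      have ea : j + (a-j) = a := by omega
      have eb : j + (b-j) = b := by omega
      have h := expA j (a-j) (b-j)
      rw [ea, eb] at h
      exact h
    unfold vA
    rw [mul_div_assoc', div_eq_div_iff
      (by exact mul_ne_zero (mul_ne_zero (Pq_ne hq _) (Pq_ne hq _)) (Pq_ne hq _))
      (by exact mul_ne_zero (Pq_ne hq _) (Pq_ne hq _))]
    linear_combination (- q^(j + tri (a-j) + tri (b-j)) * qPochN q b) * g1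
      - (q^(j + tri (a-j) + tri (b-j)) * gb q a j * (qPochN q j * qPochN q (a-j))) * g2
      - (gb q a j * (qPochN q j * qPochN q (a-j)) * gb q b j * (qPochN q j * qPochN q (b-j))) * eE
  rw [Finset.sum_congr rfl hterm, ← Finset.sum_mul, hA, one_mul]

lemma idB_div (a b : ℕ) :
    ∑ k ∈ Finset.range (min a b + 1),
        (-1)^k * q^(tri k - k) / (qPochN q k * qPochN q (a-k) * qPochN q (b-k))
      = q^(a*b) / (qPochN q a * qPochN q b) := by
  have hB : ∑ k ∈ Finset.range (min a b + 1), wB q a b k = q^(a*b) := by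
    rw [← idB q a b]
    refine Finset.sum_subset (by intro x hx; simp at hx ⊢; omega) ?_
    intro x hx hx'
    simp only [Finset.mem_range] at hx hx'
    unfold wB
    rw [gb_zero q (show b < x by omega)]
    ring
  have hterm : ∀ k ∈ Finset.range (min a b + 1),
      (-1)^k * q^(tri k - k) / (qPochN q k * qPochN q (a-k) * qPochN q (b-k))
        = wB q a b k * (1 / (qPochN q a * qPochN q b)) := by
    intro k hk
    simp only [Finset.mem_range] at hk
    have hka : k ≤ a := by omega
    have hkb : k ≤ b := by omega
    have g1 := gb_key q a k hka
    have g2 := gb_key q b k hkb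
    unfold wB
    rw [mul_div_assoc', div_eq_div_iff
      (by exact mul_ne_zero (mul_ne_zero (Pq_ne hq _) (Pq_ne hq _)) (Pq_ne hq _))
      (by exact mul_ne_zero (Pq_ne hq _) (Pq_ne hq _))]
    linear_combination ((-1:ℂ))^k * q^(tri k - k) * ((- qPochN q b) * g1
      - gb q a k * (qPochN q k * qPochN q (a-k)) * g2)
  rw [Finset.sum_congr rfl hterm, ← Finset.sum_mul, hB]
  rw [mul_one_div]

end
end Pent

namespace Pent
open Filter

lemma Pq_lower {q : ℂ} (hq : ‖q‖ < 1) :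
    ∃ δ : ℝ, 0 < δ ∧ ∀ n, δ ≤ ‖qPochN q n‖ := by
  set t := ‖q‖ with ht
  have ht0 : 0 ≤ t := norm_nonneg q
  have hc : (0:ℝ) < 1 - t := by linarith
  refine ⟨Real.exp (-((1-t)⁻¹ * (1-t)⁻¹)), Real.exp_pos _, fun n => ?_⟩
  have hfac : ∀ i : ℕ, Real.exp (-(t^(i+1) * (1-t)⁻¹)) ≤ ‖1 - q^(i+1)‖ := by
    intro i
    have h1 : ‖(1:ℂ)‖ - ‖q^(i+1)‖ ≤ ‖1 - q^(i+1)‖ := norm_sub_norm_le _ _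
    rw [norm_one, norm_pow] at h1
    have hs0 : 0 ≤ t^(i+1) := pow_nonneg ht0 _
    have hs : t^(i+1) ≤ t := pow_le_of_le_one ht0 hq.le (by omega)
    set s := t^(i+1)
    have key : Real.exp (-(s * (1-t)⁻¹)) ≤ 1 - s := by
      have h2 := Real.add_one_le_exp (s * (1-t)⁻¹)
      have h3 : Real.exp (-(s * (1-t)⁻¹)) = (Real.exp (s * (1-t)⁻¹))⁻¹ := by
        rw [← Real.exp_neg]
      rw [h3]
      have h4 : (Real.exp (s * (1-t)⁻¹))⁻¹ ≤ (1 + s * (1-t)⁻¹)⁻¹ := by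
        apply inv_anti₀
        · positivity
        · linarith
      refine h4.trans ?_
      rw [inv_le_iff_one_le_mul₀ (by positivity)]
      have h5 : s * (1-t)⁻¹ * (1-t) = s := by field_simp
      nlinarith [mul_nonneg hs0 (sub_nonneg.mpr hs), h5]
    linarith
  have hnorm : ‖qPochN q n‖ = ∏ i ∈ Finset.range n, ‖1 - q^(i+1)‖ := by
    unfold qPochN; rw [norm_prod]
  rw [hnorm]
  have hprod : ∏ i ∈ Finset.range n, Real.exp (-(t^(i+1) * (1-t)⁻¹))
      ≤ ∏ i ∈ Finset.range n, ‖1 - q^(i+1)‖ :=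
    Finset.prod_le_prod (fun i _ => (Real.exp_pos _).le) (fun i _ => hfac i)
  refine le_trans ?_ hprod
  rw [← Real.exp_sum]
  apply Real.exp_le_exp.mpr
  have hgeom : ∑ i ∈ Finset.range n, t^(i+1) ≤ (1-t)⁻¹ := by
    have h6 : ∀ i ∈ Finset.range n, t^(i+1) ≤ t^i :=
      fun i _ => pow_le_pow_of_le_one ht0 hq.le (by omega)
    refine (Finset.sum_le_sum h6).trans ?_
    rw [← tsum_geometric_of_lt_one ht0 hq]
    exact Summable.sum_le_tsum _ (fun i _ => pow_nonneg ht0 i) (summable_geometric_of_lt_one ht0 hq)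
  have h7 : ∑ i ∈ Finset.range n, -(t^(i+1) * (1-t)⁻¹)
      = -((∑ i ∈ Finset.range n, t^(i+1)) * (1-t)⁻¹) := by
    rw [Finset.sum_mul, ← Finset.sum_neg_distrib]
  rw [h7, neg_le_neg_iff]
  have h8 : (0:ℝ) < (1-t)⁻¹ := by positivity
  exact mul_le_mul_of_nonneg_right hgeom h8.le

end Pent

namespace Pent
open Filter

noncomputable def fterm (q : ℂ) (e : ℤ) (x : ℂ) (n : ℕ) : ℂ :=
  if 0 ≤ (n : ℤ) + e then
    (-1) ^ n * q ^ (n * (n + 1) / 2) * x ^ n /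
      (qPochN q n * qPochN q ((n : ℤ) + e).toNat)
  else 0

lemma summable_geo_tri {Q : ℝ} (r : ℝ) (hr : 0 ≤ r) (hQ0 : 0 ≤ Q) (hQ : Q < 1) :
    Summable (fun n : ℕ => r^n * Q^(tri n)) := by
  apply summable_of_ratio_norm_eventually_le (r := 1/2) (by norm_num)
  have htend : Tendsto (fun n : ℕ => r * Q^(n+1)) atTop (nhds 0) := by
    have h1 : Tendsto (fun n : ℕ => Q^n) atTop (nhds 0) :=
      tendsto_pow_atTop_nhds_zero_of_lt_one hQ0 hQ
    have h2 := (h1.comp (tendsto_add_atTop_nat 1)).const_mul r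
    simpa using h2
  have hev : ∀ᶠ n : ℕ in atTop, r * Q^(n+1) ≤ 1/2 :=
    (htend.eventually_lt_const (by norm_num : (0:ℝ) < 1/2)).mono (fun n h => h.le)
  filter_upwards [hev] with n hn
  have h3 : r^(n+1) * Q^(tri (n+1)) = (r * Q^(n+1)) * (r^n * Q^(tri n)) := by
    rw [tri_succ, pow_add, pow_add]; ring
  rw [Real.norm_of_nonneg (by positivity), Real.norm_of_nonneg (by positivity), h3]
  exact mul_le_mul_of_nonneg_right hn (by positivity)

section

variable {q : ℂ} {δ : ℝ} (hδ0 : 0 < δ) (hδ : ∀ n, δ ≤ ‖qPochN q n‖)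

include hδ0 hδ

lemma fterm_norm_le (e : ℤ) (x : ℂ) (n : ℕ) :
    ‖fterm q e x n‖ ≤ δ⁻¹ * δ⁻¹ * (‖x‖^n * ‖q‖^(tri n)) := by
  unfold fterm
  split_ifs with h
  · rw [norm_div, norm_mul, norm_mul, norm_pow, norm_pow, norm_pow, norm_neg, norm_one,
      one_pow, one_mul, tri_eq, norm_mul]
    have hd : δ * δ ≤ ‖qPochN q n‖ * ‖qPochN q (((n:ℤ) + e).toNat)‖ :=
      mul_le_mul (hδ _) (hδ _) hδ0.le (norm_nonneg _)
    have hd0 : (0:ℝ) < δ * δ := by positivity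
    calc ‖q‖^(tri n) * ‖x‖^n / (‖qPochN q n‖ * ‖qPochN q (((n:ℤ) + e).toNat)‖)
        ≤ ‖q‖^(tri n) * ‖x‖^n / (δ * δ) := by
          apply div_le_div_of_nonneg_left (by positivity) hd0 hd
      _ = δ⁻¹ * δ⁻¹ * (‖x‖^n * ‖q‖^(tri n)) := by field_simp
  · simp; positivity

lemma summable_fterm_norm (hq : ‖q‖ < 1) (e : ℤ) (x : ℂ) :
    Summable (fun n => ‖fterm q e x n‖) := by
  apply Summable.of_nonneg_of_le (fun n => norm_nonneg _) (fterm_norm_le hδ0 hδ e x)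
  exact (summable_geo_tri (‖x‖) (norm_nonneg x) (norm_nonneg q) hq).mul_left _

end
end Pent

namespace Pent

lemma fterm_of_neg {q x : ℂ} {e : ℤ} {n : ℕ} (h : ¬ 0 ≤ (n:ℤ)+e) : fterm q e x n = 0 :=
  if_neg h

lemma fterm_of_pos {q x : ℂ} {e : ℤ} {n : ℕ} (h : 0 ≤ (n:ℤ)+e) :
    fterm q e x n = (-1)^n * q^(tri n) * x^n / (qPochN q n * qPochN q ((n:ℤ)+e).toNat) := by
  rw [fterm, if_pos h, tri_eq]

lemma hsgn_aux (j s₁ s₂ : ℕ) :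
    ((-1:ℂ))^(j+s₁) * (-1)^(j+s₂) = (-1)^s₁ * (-1)^s₂ := by
  rw [pow_add, pow_add]
  have h : ((-1:ℂ))^j * (-1)^j = 1 := by
    rw [← pow_add, Even.neg_one_pow ⟨j, rfl⟩]
  linear_combination ((-1:ℂ))^s₁ * (-1)^s₂ * h

noncomputable def Vcore (q x₁ x₂ : ℂ) (e₁ e₂ : ℤ) (n₁ n₂ j k : ℕ) : ℂ :=
  if j ≤ n₁ ∧ j ≤ n₂ then
    (x₁*x₂*q)^((j:ℤ)-k) * fterm q (e₁+((j:ℤ)-k)) x₁ (n₁-j)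
      * fterm q (e₂+((j:ℤ)-k)) x₂ (n₂-j)
      * fterm q ((j:ℤ)-k) (x₁*x₂) k
  else 0

section
variable {q x₁ x₂ : ℂ} (e₁ e₂ : ℤ)
variable (hq : ‖q‖ < 1) (hq0 : q ≠ 0) (hx₁ : x₁ ≠ 0) (hx₂ : x₂ ≠ 0)

include hq hq0 hx₁ hx₂

set_option maxHeartbeats 2000000 in
lemma Vcore_term (n₁ n₂ j k : ℕ) (hj1 : j ≤ n₁) (hj2 : j ≤ n₂)
    (h₁ : 0 ≤ (n₁:ℤ)+e₁) (h₂ : 0 ≤ (n₂:ℤ)+e₂)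
    (hk1 : k ≤ ((n₁:ℤ)+e₁).toNat) (hk2 : k ≤ ((n₂:ℤ)+e₂).toNat) :
    Vcore q x₁ x₂ e₁ e₂ n₁ n₂ j k
      = (((-1:ℂ))^n₁ * (-1)^n₂ * (x₁^n₁ * x₂^n₂))
        * (q^(j + tri (n₁-j) + tri (n₂-j)) /
            (qPochN q (n₁-j) * qPochN q (n₂-j) * qPochN q j))
        * ((-1)^k * q^(tri k - k) /
            (qPochN q k * qPochN q (((n₁:ℤ)+e₁).toNat - k) * qPochN q (((n₂:ℤ)+e₂).toNat - k))) := by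
  rw [Vcore, if_pos ⟨hj1, hj2⟩]
  rw [fterm_of_pos (by push_cast [Nat.cast_sub hj1]; omega),
    fterm_of_pos (by push_cast [Nat.cast_sub hj2]; omega),
    fterm_of_pos (by omega)]
  have t1 : ((↑(n₁-j) : ℤ) + (e₁ + ((j:ℤ) - k))).toNat = ((n₁:ℤ)+e₁).toNat - k := by omega
  have t2 : ((↑(n₂-j) : ℤ) + (e₂ + ((j:ℤ) - k))).toNat = ((n₂:ℤ)+e₂).toNat - k := by omega
  have t3 : ((k:ℤ) + ((j:ℤ) - k)).toNat = j := by omega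
  rw [t1, t2, t3]
  obtain ⟨s₁, rfl⟩ : ∃ s, n₁ = j + s := ⟨n₁ - j, by omega⟩
  obtain ⟨s₂, rfl⟩ : ∃ s, n₂ = j + s := ⟨n₂ - j, by omega⟩
  simp only [Nat.add_sub_cancel_left]
  obtain ⟨c, hc⟩ : ∃ c, tri k = c + k := ⟨tri k - k, by have := le_tri k; omega⟩
  rw [hc, Nat.add_sub_cancel, hsgn_aux]
  have hxxq : x₁*x₂*q ≠ 0 := by
    exact mul_ne_zero (mul_ne_zero hx₁ hx₂) hq0
  rw [zpow_sub₀ hxxq, zpow_natCast, zpow_natCast]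
  have hP : ∀ n : ℕ, qPochN q n ≠ 0 := Pq_ne hq
  rw [div_mul_div_comm, div_mul_div_comm, div_mul_div_comm, mul_div_assoc', mul_div_assoc',
    div_mul_eq_mul_div, div_div]
  rw [div_eq_div_iff
    (mul_ne_zero (mul_ne_zero (mul_ne_zero (pow_ne_zero _ hxxq)
      (mul_ne_zero (hP _) (hP _))) (mul_ne_zero (hP _) (hP _))) (mul_ne_zero (hP _) (hP _)))
    (mul_ne_zero (mul_ne_zero (mul_ne_zero (hP _) (hP _)) (hP _))
      (mul_ne_zero (mul_ne_zero (hP _) (hP _)) (hP _)))]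
  ring

end
end Pent

namespace Pent
section
variable {q x₁ x₂ : ℂ} (e₁ e₂ : ℤ)
variable (hq : ‖q‖ < 1) (hq0 : q ≠ 0) (hx₁ : x₁ ≠ 0) (hx₂ : x₂ ≠ 0)

include hq hq0 hx₁ hx₂

set_option maxHeartbeats 1000000 in
lemma inner_eq (n₁ n₂ : ℕ) :
    ∑' jk : ℕ×ℕ, Vcore q x₁ x₂ e₁ e₂ n₁ n₂ jk.1 jk.2
      = q^(e₁*e₂) * fterm q e₁ (q^e₂*x₁) n₁ * fterm q e₂ (q^e₁*x₂) n₂ := by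
  rcases em (0 ≤ (n₁:ℤ)+e₁ ∧ 0 ≤ (n₂:ℤ)+e₂) with ⟨h₁,h₂⟩ | hbad
  · -- main case
    rw [tsum_eq_sum (s := Finset.range (min n₁ n₂ + 1)
        ×ˢ Finset.range (min (((n₁:ℤ)+e₁).toNat) (((n₂:ℤ)+e₂).toNat) + 1))
      (f := fun jk : ℕ×ℕ => Vcore q x₁ x₂ e₁ e₂ n₁ n₂ jk.1 jk.2) ?vanish]
    case vanish =>
      rintro ⟨j,k⟩ hjk
      simp only [Finset.mem_product, Finset.mem_range, not_and_or, not_lt] at hjk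
      show Vcore q x₁ x₂ e₁ e₂ n₁ n₂ j k = 0
      rw [Vcore]
      split_ifs with hg
      · obtain ⟨hg1,hg2⟩ := hg
        rcases hjk with hb | hb
        · exact absurd hg1 (by omega)
        · rcases le_or_gt k (((n₁:ℤ)+e₁).toNat) with hbk | hbk
          · rw [fterm_of_neg (show ¬ 0 ≤ ((n₂-j:ℕ):ℤ) + (e₂+((j:ℤ)-k)) by
              push_cast [Nat.cast_sub hg2]; omega)]
            ring
          · rw [fterm_of_neg (show ¬ 0 ≤ ((n₁-j:ℕ):ℤ) + (e₁+((j:ℤ)-k)) by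
              push_cast [Nat.cast_sub hg1]; omega)]
            ring
      · rfl
    rw [Finset.sum_product]
    rw [Finset.sum_congr rfl (fun j hj => Finset.sum_congr rfl (fun k hk =>
      Vcore_term e₁ e₂ hq hq0 hx₁ hx₂ n₁ n₂ j k
        (by simp only [Finset.mem_range] at hj; omega)
        (by simp only [Finset.mem_range] at hj; omega)
        h₁ h₂
        (by simp only [Finset.mem_range] at hk; omega)
        (by simp only [Finset.mem_range] at hk; omega)))]
    rw [Finset.sum_congr rfl (fun j _ => (Finset.mul_sum _ _ _).symm)]
    rw [← Finset.sum_mul, ← Finset.mul_sum]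
    rw [idA_div hq, idB_div hq]
    rw [fterm_of_pos h₁, fterm_of_pos h₂]
    have hp₁ : (q^e₂*x₁)^n₁ = q^(e₂*(n₁:ℤ)) * x₁^n₁ := by
      rw [mul_pow]; congr 1; rw [← zpow_natCast (q^e₂) n₁, ← zpow_mul]
    have hp₂ : (q^e₁*x₂)^n₂ = q^(e₁*(n₂:ℤ)) * x₂^n₂ := by
      rw [mul_pow]; congr 1; rw [← zpow_natCast (q^e₁) n₂, ← zpow_mul]
    rw [hp₁, hp₂]
    have hDAZ : (n₁:ℤ)*n₂ ≤ (tri n₁ : ℤ) + tri n₂ := by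
      have a := two_tri n₁; have b := two_tri n₂
      zify at a b
      nlinarith [sq_nonneg ((n₁:ℤ)-(n₂:ℤ)), a, b]
    have hDA : n₁*n₂ ≤ tri n₁ + tri n₂ := by exact_mod_cast hDAZ
    have hqpow : q^(tri n₁ + tri n₂ - n₁*n₂) * q^((((n₁:ℤ)+e₁).toNat) * (((n₂:ℤ)+e₂).toNat))
        = q^(e₁*e₂) * (q^(e₂*(n₁:ℤ)) * (q^(e₁*(n₂:ℤ)) * (q^(tri n₁) * q^(tri n₂)))) := by
      rw [← zpow_natCast q (tri n₁ + tri n₂ - n₁*n₂), ← zpow_natCast q (_ * _),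
        ← zpow_natCast q (tri n₁), ← zpow_natCast q (tri n₂),
        ← zpow_add₀ hq0, ← zpow_add₀ hq0, ← zpow_add₀ hq0, ← zpow_add₀ hq0, ← zpow_add₀ hq0]
      congr 1
      push_cast [Nat.cast_sub hDA, Int.toNat_of_nonneg h₁, Int.toNat_of_nonneg h₂]
      ring
    linear_combination (((-1:ℂ))^n₁*(-1)^n₂*x₁^n₁*x₂^n₂
      * ((qPochN q n₁)⁻¹ * (qPochN q n₂)⁻¹
        * (qPochN q (((n₁:ℤ)+e₁).toNat))⁻¹ * (qPochN q (((n₂:ℤ)+e₂).toNat))⁻¹)) * hqpow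
  · -- degenerate case
    have hz : ∀ jk : ℕ×ℕ, Vcore q x₁ x₂ e₁ e₂ n₁ n₂ jk.1 jk.2 = 0 := by
      rintro ⟨j,k⟩
      show Vcore q x₁ x₂ e₁ e₂ n₁ n₂ j k = 0
      rw [Vcore]
      split_ifs with hg
      · obtain ⟨hg1, hg2⟩ := hg
        rcases not_and_or.mp hbad with hb | hb
        · rw [fterm_of_neg (show ¬ 0 ≤ ((n₁-j:ℕ):ℤ) + (e₁+((j:ℤ)-k)) by
            push_cast [Nat.cast_sub hg1]; omega)]
          ring
        · rw [fterm_of_neg (show ¬ 0 ≤ ((n₂-j:ℕ):ℤ) + (e₂+((j:ℤ)-k)) by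
            push_cast [Nat.cast_sub hg2]; omega)]
          ring
      · rfl
    rw [tsum_eq_sum (s := (∅ : Finset (ℕ×ℕ))) (fun b _ => hz b), Finset.sum_empty]
    rcases not_and_or.mp hbad with hb | hb
    · rw [fterm_of_neg hb]; ring
    · rw [fterm_of_neg hb]; ring

end
end Pent

namespace Pent

noncomputable def Wt (q x₁ x₂ : ℂ) (e₁ e₂ : ℤ) (p : ℤ × ((ℕ×ℕ)×ℕ)) : ℂ :=
  (x₁*x₂*q)^p.1 * fterm q (e₁+p.1) x₁ p.2.1.1 * fterm q (e₂+p.1) x₂ p.2.1.2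
    * fterm q p.1 (x₁*x₂) p.2.2

def psi (v : (ℕ×ℕ)×(ℕ×ℕ)) : ℤ × ((ℕ×ℕ)×ℕ) := ((v.2.2:ℤ) - v.2.1, (v.1, v.2.1))

def phi (v : (ℕ×ℕ)×(ℕ×ℕ)) : (ℕ×ℕ)×(ℕ×ℕ) :=
  ((v.1.1 + v.2.2, v.1.2 + v.2.2), (v.2.2, v.2.1))

noncomputable def Vt (q x₁ x₂ : ℂ) (e₁ e₂ : ℤ) (u : (ℕ×ℕ)×(ℕ×ℕ)) : ℂ :=
  Vcore q x₁ x₂ e₁ e₂ u.1.1 u.1.2 u.2.1 u.2.2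

lemma psi_inj : Function.Injective psi := by
  intro v w h
  simp only [psi, Prod.mk.injEq] at h
  obtain ⟨h1, h2, h3⟩ := h
  have h4 : v.2.2 = w.2.2 := by omega
  exact Prod.ext h2 (Prod.ext h3 h4)

lemma phi_inj : Function.Injective phi := by
  intro v w h
  simp only [phi, Prod.mk.injEq] at h
  obtain ⟨⟨h1, h2⟩, h3, h4⟩ := h
  refine Prod.ext (Prod.ext ?_ ?_) (Prod.ext h4 h3) <;> omega

section
variable (q x₁ x₂ : ℂ) (e₁ e₂ : ℤ)

lemma W_psi_eq_V_phi (v : (ℕ×ℕ)×(ℕ×ℕ)) :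
    Wt q x₁ x₂ e₁ e₂ (psi v) = Vt q x₁ x₂ e₁ e₂ (phi v) := by
  show Wt q x₁ x₂ e₁ e₂ ((v.2.2:ℤ) - v.2.1, (v.1, v.2.1))
    = Vcore q x₁ x₂ e₁ e₂ (v.1.1 + v.2.2) (v.1.2 + v.2.2) v.2.2 v.2.1
  rw [Wt, Vcore, if_pos ⟨Nat.le_add_left _ _, Nat.le_add_left _ _⟩]
  simp [Nat.add_sub_cancel]

lemma W_supp : Function.support (Wt q x₁ x₂ e₁ e₂) ⊆ Set.range psi := by
  intro p hp
  rcases le_or_gt 0 ((p.2.2:ℤ) + p.1) with h | h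
  · refine ⟨(p.2.1, (p.2.2, (p.1 + p.2.2).toNat)), ?_⟩
    refine Prod.ext ?_ rfl
    show ((p.1 + (p.2.2:ℤ)).toNat : ℤ) - (p.2.2:ℤ) = p.1
    omega
  · exact absurd (by
      rw [Wt, fterm_of_neg (show ¬ (0:ℤ) ≤ ((p.2.2:ℕ):ℤ) + p.1 by omega)]; ring) hp

lemma V_supp : Function.support (Vt q x₁ x₂ e₁ e₂) ⊆ Set.range phi := by
  intro u hu
  by_cases h : u.2.1 ≤ u.1.1 ∧ u.2.1 ≤ u.1.2
  · refine ⟨((u.1.1 - u.2.1, u.1.2 - u.2.1), (u.2.2, u.2.1)), ?_⟩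
    show ((u.1.1 - u.2.1 + u.2.1, u.1.2 - u.2.1 + u.2.1), (u.2.1, u.2.2)) = u
    have e1 : u.1.1 - u.2.1 + u.2.1 = u.1.1 := by omega
    have e2 : u.1.2 - u.2.1 + u.2.1 = u.1.2 := by omega
    rw [e1, e2]
  · exact absurd (by rw [Vt, Vcore, if_neg h]) hu

end
end Pent

namespace Pent

lemma tri_lb (k : ℕ) : k - 1 ≤ tri k - k := by
  match k with
  | 0 => simp [tri]
  | 1 => simp [tri]
  | (k+2) =>
    have h1 : tri (k+2) = tri (k+1) + (k+2) := tri_succ (k+1)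
    have h2 : tri (k+1) = tri k + (k+1) := tri_succ k
    omega

section
variable {q x₁ x₂ : ℂ} (e₁ e₂ : ℤ) {δ : ℝ}
variable (hq : ‖q‖ < 1) (hq0 : q ≠ 0) (hx₁ : x₁ ≠ 0) (hx₂ : x₂ ≠ 0)
  (hxxq : ‖x₁ * x₂ * q‖ < 1) (hδ0 : 0 < δ) (hδ : ∀ n, δ ≤ ‖qPochN q n‖)

include hq hq0 hx₁ hx₂ hxxq hδ0 hδ

lemma summable_W_psi_norm :
    Summable (fun v : (ℕ×ℕ)×(ℕ×ℕ) => ‖Wt q x₁ x₂ e₁ e₂ (psi v)‖) := by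
  have hQ0 : (0:ℝ) < ‖q‖ := norm_pos_iff.mpr hq0
  have hs0 : (0:ℝ) < ‖x₁*x₂*q‖ := norm_pos_iff.mpr (mul_ne_zero (mul_ne_zero hx₁ hx₂) hq0)
  have hg1 : Summable (fun k : ℕ => δ⁻¹*δ⁻¹ * (‖x₁‖^k * ‖q‖^(tri k))) :=
    (summable_geo_tri ‖x₁‖ (norm_nonneg _) (norm_nonneg q) hq).mul_left _
  have hg2 : Summable (fun k : ℕ => δ⁻¹*δ⁻¹ * (‖x₂‖^k * ‖q‖^(tri k))) :=
    (summable_geo_tri ‖x₂‖ (norm_nonneg _) (norm_nonneg q) hq).mul_left _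
  have hg3 : Summable (fun k : ℕ => δ⁻¹*δ⁻¹ * ‖q‖^(tri k - k)) := by
    apply Summable.of_nonneg_of_le (fun k => by positivity) (fun k => ?_)
      (((summable_geometric_of_lt_one hQ0.le hq).mul_left (δ⁻¹*δ⁻¹ * ‖q‖⁻¹)))
    have hb1 : ‖q‖^(tri k - k) ≤ ‖q‖^(k-1) :=
      pow_le_pow_of_le_one hQ0.le hq.le (tri_lb k)
    have hb2 : ‖q‖^(k-1) ≤ ‖q‖⁻¹ * ‖q‖^k := by
      rcases Nat.eq_zero_or_pos k with rfl | hk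
      · simpa using (one_le_inv₀ hQ0).mpr hq.le
      · obtain ⟨k', rfl⟩ : ∃ k', k = k'+1 := ⟨k-1, by omega⟩
        have h9 : ‖q‖⁻¹ * ‖q‖^(k'+1) = ‖q‖^(k'+1-1) := by
          rw [pow_succ, Nat.add_sub_cancel, mul_comm, mul_assoc,
            mul_inv_cancel₀ hQ0.ne', mul_one]
        rw [h9]
    calc δ⁻¹*δ⁻¹ * ‖q‖^(tri k - k) ≤ δ⁻¹*δ⁻¹ * (‖q‖⁻¹ * ‖q‖^k) := by
          apply mul_le_mul_of_nonneg_left (hb1.trans hb2) (by positivity)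
      _ = δ⁻¹*δ⁻¹ * ‖q‖⁻¹ * ‖q‖^k := by ring
  have hg4 : Summable (fun j : ℕ => ‖x₁*x₂*q‖^j) :=
    summable_geometric_of_lt_one hs0.le hxxq
  have hG : Summable (fun v : (ℕ×ℕ)×(ℕ×ℕ) =>
      ((δ⁻¹*δ⁻¹ * (‖x₁‖^v.1.1 * ‖q‖^(tri v.1.1)))
        * (δ⁻¹*δ⁻¹ * (‖x₂‖^v.1.2 * ‖q‖^(tri v.1.2))))
      * ((δ⁻¹*δ⁻¹ * ‖q‖^(tri v.2.1 - v.2.1)) * ‖x₁*x₂*q‖^v.2.2)) := by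
    apply Summable.mul_of_nonneg
      (Summable.mul_of_nonneg hg1 hg2 (fun k => by positivity) (fun k => by positivity))
      (Summable.mul_of_nonneg hg3 hg4 (fun k => by positivity) (fun k => by positivity))
      (fun v => by positivity) (fun v => by positivity)
  apply Summable.of_nonneg_of_le (fun _ => norm_nonneg _) ?_ hG
  rintro ⟨⟨k₁,k₂⟩,k₃,j⟩
  show ‖Wt q x₁ x₂ e₁ e₂ (((j:ℕ):ℤ) - (k₃:ℕ), ((k₁,k₂),k₃))‖ ≤ _
  rw [Wt, norm_mul, norm_mul, norm_mul, norm_zpow]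
  have b1 := fterm_norm_le hδ0 hδ (e₁+(((j:ℕ):ℤ)-(k₃:ℕ))) x₁ k₁
  have b2 := fterm_norm_le hδ0 hδ (e₂+(((j:ℕ):ℤ)-(k₃:ℕ))) x₂ k₂
  have b3 := fterm_norm_le hδ0 hδ (((j:ℕ):ℤ)-(k₃:ℕ)) (x₁*x₂) k₃
  calc ‖x₁*x₂*q‖^(((j:ℕ):ℤ) - (k₃:ℕ)) * ‖fterm q (e₁+(((j:ℕ):ℤ)-(k₃:ℕ))) x₁ k₁‖
        * ‖fterm q (e₂+(((j:ℕ):ℤ)-(k₃:ℕ))) x₂ k₂‖ * ‖fterm q (((j:ℕ):ℤ)-(k₃:ℕ)) (x₁*x₂) k₃‖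
      ≤ ‖x₁*x₂*q‖^(((j:ℕ):ℤ) - (k₃:ℕ)) * (δ⁻¹*δ⁻¹ * (‖x₁‖^k₁ * ‖q‖^(tri k₁)))
        * (δ⁻¹*δ⁻¹ * (‖x₂‖^k₂ * ‖q‖^(tri k₂)))
        * (δ⁻¹*δ⁻¹ * (‖x₁*x₂‖^k₃ * ‖q‖^(tri k₃))) := by
        apply mul_le_mul (mul_le_mul (mul_le_mul le_rfl b1 (norm_nonneg _) (by positivity))
          b2 (norm_nonneg _) (by positivity)) b3 (norm_nonneg _) (by positivity)
    _ = _ := by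
        show _ = δ⁻¹ * δ⁻¹ * (‖x₁‖^k₁ * ‖q‖^(tri k₁))
          * (δ⁻¹*δ⁻¹*(‖x₂‖^k₂ * ‖q‖^(tri k₂)))
          * (δ⁻¹*δ⁻¹*‖q‖^(tri k₃ - k₃) * ‖x₁*x₂*q‖^j)
        have hs_split : ‖x₁*x₂*q‖^(((j:ℕ):ℤ) - (k₃:ℕ)) * ‖x₁*x₂‖^k₃ * ‖q‖^(tri k₃)
            = ‖q‖^(tri k₃ - k₃) * ‖x₁*x₂*q‖^j := by
          rw [zpow_sub₀ hs0.ne', zpow_natCast, zpow_natCast]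
          rw [show ‖x₁*x₂*q‖ = ‖x₁*x₂‖ * ‖q‖ from norm_mul _ _]
          have hm0 : ‖x₁*x₂‖ ≠ 0 := norm_ne_zero_iff.mpr (mul_ne_zero hx₁ hx₂)
          rw [div_mul_eq_mul_div, div_mul_eq_mul_div,
            div_eq_iff (pow_ne_zero _ (mul_ne_zero hm0 hQ0.ne'))]
          have hpk : ‖q‖^(tri k₃ - k₃) * ‖q‖^(k₃) = ‖q‖^(tri k₃) := by
            rw [← pow_add]; congr 1; have := le_tri k₃; omega
          linear_combination (-(‖x₁*x₂‖*‖q‖)^j * ‖x₁*x₂‖^k₃) * hpk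
        linear_combination ((δ⁻¹*δ⁻¹ * (‖x₁‖^k₁ * ‖q‖^(tri k₁)))
          * (δ⁻¹*δ⁻¹ * (‖x₂‖^k₂ * ‖q‖^(tri k₂))) * (δ⁻¹*δ⁻¹)) * hs_split

end
end Pent


open Pent

/-- Pentagon identity for the series `F_e`:
`q^{e₁e₂} F_{e₁}(q^{e₂}x₁) F_{e₂}(q^{e₁}x₂)
  = ∑_{e₃ ∈ ℤ} (x₁x₂q)^{e₃} F_{e₁+e₃}(x₁) F_{e₂+e₃}(x₂) F_{e₃}(x₁x₂)`. -/
theorem pentagon_Fser (q x₁ x₂ : ℂ) (e₁ e₂ : ℤ)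
    (hq : ‖q‖ < 1) (hq0 : q ≠ 0) (hx₁ : x₁ ≠ 0) (hx₂ : x₂ ≠ 0)
    (hxxq : ‖x₁ * x₂ * q‖ < 1) :
    q ^ (e₁ * e₂) * Fser q e₁ (q ^ e₂ * x₁) * Fser q e₂ (q ^ e₁ * x₂) =
      ∑' e₃ : ℤ, (x₁ * x₂ * q) ^ e₃ * Fser q (e₁ + e₃) x₁ *
        Fser q (e₂ + e₃) x₂ * Fser q e₃ (x₁ * x₂) := by
  obtain ⟨δ, hδ0, hδ⟩ := Pq_lower hq
  have hfn : ∀ (e : ℤ) (x : ℂ), Summable (fun n => ‖fterm q e x n‖) :=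
    fun e x => summable_fterm_norm hδ0 hδ hq e x
  have hWψnorm := summable_W_psi_norm e₁ e₂ hq hq0 hx₁ hx₂ hxxq hδ0 hδ
  have hWψ : Summable (Wt q x₁ x₂ e₁ e₂ ∘ psi) := hWψnorm.of_norm
  have hW : Summable (Wt q x₁ x₂ e₁ e₂) :=
    (psi_inj.summable_iff (fun p hp => by
      by_contra h
      exact hp (W_supp q x₁ x₂ e₁ e₂ (Function.mem_support.mpr h)))).mp hWψ
  have hVφ : Summable (Vt q x₁ x₂ e₁ e₂ ∘ phi) :=
    hWψ.congr (fun v => W_psi_eq_V_phi q x₁ x₂ e₁ e₂ v)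
  have hV : Summable (Vt q x₁ x₂ e₁ e₂) :=
    (phi_inj.summable_iff (fun u hu => by
      by_contra h
      exact hu (V_supp q x₁ x₂ e₁ e₂ (Function.mem_support.mpr h)))).mp hVφ
  have hL : q^(e₁*e₂) * Fser q e₁ (q^e₂*x₁) * Fser q e₂ (q^e₁*x₂)
      = ∑' nn : ℕ×ℕ, q^(e₁*e₂) * fterm q e₁ (q^e₂*x₁) nn.1 * fterm q e₂ (q^e₁*x₂) nn.2 := by
    have h1 : Fser q e₁ (q^e₂*x₁) = ∑' n, fterm q e₁ (q^e₂*x₁) n := rfl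
    have h2 : Fser q e₂ (q^e₁*x₂) = ∑' n, fterm q e₂ (q^e₁*x₂) n := rfl
    rw [h1, h2]
    calc (q^(e₁*e₂) * ∑' n, fterm q e₁ (q^e₂*x₁) n) * (∑' n, fterm q e₂ (q^e₁*x₂) n)
        = (∑' n, q^(e₁*e₂) * fterm q e₁ (q^e₂*x₁) n) * (∑' n, fterm q e₂ (q^e₁*x₂) n) := by
          rw [tsum_mul_left]
      _ = ∑' nn : ℕ×ℕ, q^(e₁*e₂) * fterm q e₁ (q^e₂*x₁) nn.1 * fterm q e₂ (q^e₁*x₂) nn.2 :=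
          tsum_mul_tsum_of_summable_norm
            (((hfn e₁ (q^e₂*x₁)).mul_left ‖q^(e₁*e₂)‖).congr (fun n => (norm_mul _ _).symm))
            (hfn e₂ (q^e₁*x₂))
  have hInner : ∀ nn : ℕ×ℕ,
      q^(e₁*e₂) * fterm q e₁ (q^e₂*x₁) nn.1 * fterm q e₂ (q^e₁*x₂) nn.2
        = ∑' jk : ℕ×ℕ, Vt q x₁ x₂ e₁ e₂ (nn, jk) :=
    fun nn => (inner_eq e₁ e₂ hq hq0 hx₁ hx₂ nn.1 nn.2).symm
  have hR : ∑' p, Wt q x₁ x₂ e₁ e₂ p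
      = ∑' e₃ : ℤ, (x₁*x₂*q)^e₃ * Fser q (e₁+e₃) x₁ * Fser q (e₂+e₃) x₂ * Fser q e₃ (x₁*x₂) := by
    rw [Summable.tsum_prod' hW (fun e₃ => hW.prod_factor e₃)]
    refine tsum_congr (fun e₃ => ?_)
    have hA : Summable (fun n => ‖(x₁*x₂*q)^e₃ * fterm q (e₁+e₃) x₁ n‖) :=
      ((hfn (e₁+e₃) x₁).mul_left ‖(x₁*x₂*q)^e₃‖).congr (fun n => (norm_mul _ _).symm)
    have h12 : ((x₁*x₂*q)^e₃ * ∑' n, fterm q (e₁+e₃) x₁ n) * (∑' n, fterm q (e₂+e₃) x₂ n)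
        = ∑' z : ℕ×ℕ, ((x₁*x₂*q)^e₃ * fterm q (e₁+e₃) x₁ z.1) * fterm q (e₂+e₃) x₂ z.2 := by
      calc ((x₁*x₂*q)^e₃ * ∑' n, fterm q (e₁+e₃) x₁ n) * (∑' n, fterm q (e₂+e₃) x₂ n)
          = (∑' n, (x₁*x₂*q)^e₃ * fterm q (e₁+e₃) x₁ n) * (∑' n, fterm q (e₂+e₃) x₂ n) := by
            rw [tsum_mul_left]
        _ = _ := tsum_mul_tsum_of_summable_norm hA (hfn (e₂+e₃) x₂)
    have hABn : Summable (fun z : ℕ×ℕ =>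
        ‖((x₁*x₂*q)^e₃ * fterm q (e₁+e₃) x₁ z.1) * fterm q (e₂+e₃) x₂ z.2‖) :=
      (Summable.mul_of_nonneg hA (hfn (e₂+e₃) x₂)
        (fun _ => norm_nonneg _) (fun _ => norm_nonneg _)).congr
        (fun z => (norm_mul _ _).symm)
    calc ∑' t : (ℕ×ℕ)×ℕ, Wt q x₁ x₂ e₁ e₂ (e₃, t)
        = (∑' z : ℕ×ℕ, ((x₁*x₂*q)^e₃ * fterm q (e₁+e₃) x₁ z.1) * fterm q (e₂+e₃) x₂ z.2)
            * (∑' n, fterm q e₃ (x₁*x₂) n) :=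
          (tsum_mul_tsum_of_summable_norm hABn (hfn e₃ (x₁*x₂))).symm
      _ = (x₁*x₂*q)^e₃ * Fser q (e₁+e₃) x₁ * Fser q (e₂+e₃) x₂ * Fser q e₃ (x₁*x₂) := by
          rw [← h12]; rfl
  calc q^(e₁*e₂) * Fser q e₁ (q^e₂*x₁) * Fser q e₂ (q^e₁*x₂)
      = ∑' nn : ℕ×ℕ, q^(e₁*e₂) * fterm q e₁ (q^e₂*x₁) nn.1 * fterm q e₂ (q^e₁*x₂) nn.2 := hL
    _ = ∑' nn : ℕ×ℕ, ∑' jk : ℕ×ℕ, Vt q x₁ x₂ e₁ e₂ (nn, jk) := tsum_congr hInner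
    _ = ∑' u, Vt q x₁ x₂ e₁ e₂ u := (Summable.tsum_prod' hV (fun nn => hV.prod_factor nn)).symm
    _ = ∑' v, Vt q x₁ x₂ e₁ e₂ (phi v) := (phi_inj.tsum_eq (V_supp q x₁ x₂ e₁ e₂)).symm
    _ = ∑' v, Wt q x₁ x₂ e₁ e₂ (psi v) :=
        tsum_congr (fun v => (W_psi_eq_V_phi q x₁ x₂ e₁ e₂ v).symm)
    _ = ∑' p, Wt q x₁ x₂ e₁ e₂ p := psi_inj.tsum_eq (W_supp q x₁ x₂ e₁ e₂)
    _ = ∑' e₃ : ℤ, (x₁*x₂*q)^e₃ * Fser q (e₁+e₃) x₁ * Fser q (e₂+e₃) x₂ * Fser q e₃ (x₁*x₂) := hR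
end
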